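/- arXiv:2111.05292 — 6 statements merged into one kernel-verified Lean document; each statement's English description precedes it below -/
import Mathlib

section
/- Metric entropy bound for variational unitary circuits in spectral norm: let m and T be positive integers, let V_0, V_1, …, V_T ∈ U(4m) be fixed unitaries, and define F : U(4)^T → U(4m) by F(U_1,…,U_T) = V_T (U_T ⊗ I_m) V_{T−1} ⋯ V_1 (U_1 ⊗ I_m) V_0. Then for every ε ∈ (0,1] there exists a finite set 𝒩 of complex (4m)×(4m) matrices contained in the image of F such that |𝒩| ≤ (6T/ε)^{32T} and for every θ ∈ U(4)^T there exists W ∈ 𝒩 with ‖F(θ) − W‖ ≤ ε in the ℓ²-operator norm. -/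
open Matrix
open scoped Kronecker

/-- The ℓ²→ℓ² operator norm (spectral norm) of a complex square matrix. -/
noncomputable def opNorm {n : Type*} [Fintype n] [DecidableEq n] (A : Matrix n n ℂ) : ℝ :=
  ‖Matrix.toEuclideanCLM (𝕜 := ℂ) A‖

/-- The variational unitary circuit: `circuit V U L = V L * (U (L-1) ⊗ I) * ⋯ * (U 0 ⊗ I) * V 0`,
i.e. `L` layers of 2-qubit gates interleaved with fixed global unitaries on `ℂ^{4m}`. -/
noncomputable def circuit {m : ℕ} (V : ℕ → Matrix (Fin 4 × Fin m) (Fin 4 × Fin m) ℂ)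
    (U : ℕ → Matrix (Fin 4) (Fin 4) ℂ) : ℕ → Matrix (Fin 4 × Fin m) (Fin 4 × Fin m) ℂ
  | 0 => V 0
  | (t + 1) => V (t + 1) * (U t ⊗ₖ (1 : Matrix (Fin m) (Fin m) ℂ)) * circuit V U t

section Aux

open Metric MeasureTheory Module
open scoped ENNReal Matrix.Norms.L2Operator

/-- Volume-argument covering lemma: a subset of the unit ball of a finite-dimensional real
normed space admits, for `δ ∈ (0,1]`, a `δ`-net inside itself of cardinality at most
`(3/δ) ^ dim`. -/
lemma exists_net (E : Type*) [NormedAddCommGroup E] [NormedSpace ℝ E] [FiniteDimensional ℝ E]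
    (K : Set E) (hK : K ⊆ closedBall 0 1) {δ : ℝ} (hδ0 : 0 < δ) (hδ1 : δ ≤ 1) :
    ∃ s : Finset E, ↑s ⊆ K ∧ (s.card : ℝ) ≤ (3 / δ) ^ (finrank ℝ E) ∧
      ∀ x ∈ K, ∃ y ∈ s, dist x y ≤ δ := by
  classical
  borelize E
  set D := finrank ℝ E with hD
  obtain ⟨b⟩ : Nonempty (Basis (Fin D) ℝ E) := ⟨finBasis ℝ E⟩
  set μ : Measure E := b.addHaar with hμ
  haveI : μ.IsAddHaarMeasure := inferInstance
  have hball_pos : 0 < μ (ball 0 1) := measure_ball_pos μ 0 one_pos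
  have hball_lt : μ (ball 0 1) < ⊤ := measure_ball_lt_top
  set P : Finset E → Prop := fun s => ↑s ⊆ K ∧ ∀ x ∈ s, ∀ y ∈ s, x ≠ y → δ < dist x y with hP
  have key : ∀ s : Finset E, P s → (s.card : ℝ) ≤ (3 / δ) ^ D := by
    intro s ⟨hsK, hsep⟩
    have hδ2 : (0:ℝ) < δ / 2 := by linarith
    have hdisj : (s : Set E).PairwiseDisjoint (fun x => ball x (δ / 2)) := by
      intro x hx y hy hxy
      apply ball_disjoint_ball
      have := hsep x hx y hy hxy
      linarith
    have hsub : ∀ x ∈ s, ball x (δ / 2) ⊆ ball 0 (1 + δ / 2) := by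
      intro x hx z hz
      have hx1 : dist x 0 ≤ 1 := mem_closedBall.mp (hK (hsK hx))
      have h2 : dist z x < δ / 2 := mem_ball.mp hz
      have h3 : dist z 0 ≤ dist z x + dist x 0 := dist_triangle _ _ _
      exact mem_ball.mpr (by linarith)
    have hmeas : (s.card : ℝ≥0∞) * μ (ball 0 (δ / 2)) ≤ μ (ball 0 (1 + δ / 2)) := by
      calc (s.card : ℝ≥0∞) * μ (ball 0 (δ / 2))
          = ∑ x ∈ s, μ (ball x (δ / 2)) := by
            simp [Measure.addHaar_ball_center μ, Finset.sum_const, nsmul_eq_mul]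
        _ = μ (⋃ x ∈ s, ball x (δ / 2)) :=
            (measure_biUnion_finset hdisj (fun _ _ => measurableSet_ball)).symm
        _ ≤ μ (ball 0 (1 + δ / 2)) := measure_mono (Set.iUnion₂_subset hsub)
    rw [Measure.addHaar_ball_of_pos μ _ hδ2,
      Measure.addHaar_ball_of_pos μ _ (by linarith : (0:ℝ) < 1 + δ/2)] at hmeas
    rw [← mul_assoc] at hmeas
    have hcancel := (ENNReal.mul_le_mul_iff_left hball_pos.ne' hball_lt.ne).mp hmeas
    have hreal : (s.card : ℝ) * (δ / 2) ^ D ≤ (1 + δ / 2) ^ D := by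
      have h1 : ((s.card : ℝ≥0∞)) * ENNReal.ofReal ((δ/2) ^ D)
          = ENNReal.ofReal ((s.card : ℝ) * (δ/2) ^ D) := by
        rw [ENNReal.ofReal_mul (by positivity), ENNReal.ofReal_natCast]
      rw [h1] at hcancel
      exact (ENNReal.ofReal_le_ofReal_iff (by positivity)).mp hcancel
    have hpow : ((1 + δ / 2) / (δ / 2)) ^ D ≤ (3 / δ) ^ D := by
      apply pow_le_pow_left₀ (by positivity)
      rw [div_le_div_iff₀ hδ2 hδ0]
      nlinarith [hδ0.le, hδ1]
    calc (s.card : ℝ) ≤ ((1 + δ / 2) / (δ / 2)) ^ D := by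
          rw [div_pow, le_div_iff₀ (by positivity)]
          exact hreal
      _ ≤ (3 / δ) ^ D := hpow
  set S : Set ℕ := {n | ∃ s : Finset E, P s ∧ s.card = n} with hS
  have hSne : S.Nonempty := ⟨0, ∅, ⟨by simp, by simp⟩, rfl⟩
  have hSbdd : BddAbove S := by
    refine ⟨Nat.floor ((3 / δ) ^ D), ?_⟩
    rintro n ⟨s, hs, rfl⟩
    exact Nat.le_floor (key s hs)
  obtain ⟨s, hs, hscard⟩ := Nat.sSup_mem hSne hSbdd
  refine ⟨s, hs.1, hscard ▸ key s hs, ?_⟩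
  intro x hx
  by_contra hcon
  push_neg at hcon
  have hxs : x ∉ s := fun hxs => by
    have := hcon x hxs; simp at this; linarith
  have hP' : P (insert x s) := by
    constructor
    · intro z hz
      rcases Finset.mem_insert.mp (by exact_mod_cast hz) with rfl | hz'
      · exact hx
      · exact hs.1 hz'
    · intro a ha b hb hab
      rcases Finset.mem_insert.mp ha with rfl | ha' <;>
        rcases Finset.mem_insert.mp hb with rfl | hb'
      · exact absurd rfl hab
      · exact hcon b hb'
      · rw [dist_comm]; exact hcon a ha'
      · exact hs.2 a ha' b hb' hab
  have hmem : (insert x s).card ∈ S := ⟨_, hP', rfl⟩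
  have hle := le_csSup hSbdd hmem
  rw [Finset.card_insert_of_notMem hxs, hscard] at hle
  omega

variable {n : Type*} [Fintype n] [DecidableEq n]

lemma l2_opNorm_le_of_mulVec (A : Matrix n n ℂ) {c : ℝ} (hc : 0 ≤ c)
    (h : ∀ x : EuclideanSpace ℂ n, ‖(EuclideanSpace.equiv n ℂ).symm (A *ᵥ x)‖ ≤ c * ‖x‖) :
    ‖A‖ ≤ c := by
  rw [Matrix.l2_opNorm_def]
  exact ContinuousLinearMap.opNorm_le_bound _ hc h

lemma norm_one_matrix [Nonempty n] : ‖(1 : Matrix n n ℂ)‖ = 1 := by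
  rw [Matrix.cstar_norm_def, _root_.map_one]
  exact ContinuousLinearMap.norm_id

lemma norm_of_unitary [Nonempty n] {U : Matrix n n ℂ} (h : U ∈ Matrix.unitaryGroup n ℂ) :
    ‖U‖ = 1 := by
  have h1 : Uᴴ * U = 1 := by
    have := (Matrix.mem_unitaryGroup_iff'.mp h)
    rwa [Matrix.star_eq_conjTranspose] at this
  have h2 : ‖U‖ * ‖U‖ = 1 := by
    rw [← Matrix.l2_opNorm_conjTranspose_mul_self U, h1, norm_one_matrix]
  rcases mul_self_eq_one_iff.mp h2 with h | h
  · exact h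
  · nlinarith [norm_nonneg ((1 : Matrix n n ℂ)), norm_nonneg U]

lemma euclidean_sq_norm {ι : Type*} [Fintype ι] (v : ι → ℂ) :
    ‖(EuclideanSpace.equiv ι ℂ).symm v‖ ^ 2 = ∑ i, ‖v i‖ ^ 2 := by
  rw [EuclideanSpace.norm_eq, Real.sq_sqrt (by positivity)]
  rfl

lemma kron_one_norm_le {p q : Type*} [Fintype p] [DecidableEq p] [Fintype q] [DecidableEq q]
    (A : Matrix p p ℂ) : ‖A ⊗ₖ (1 : Matrix q q ℂ)‖ ≤ ‖A‖ := by
  apply l2_opNorm_le_of_mulVec _ (norm_nonneg A)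
  intro x
  have hy : ∀ i : p, ∀ j : q, ((A ⊗ₖ (1 : Matrix q q ℂ)) *ᵥ x) (i, j)
      = (A *ᵥ fun k => x (k, j)) i := by
    intro i j
    simp only [Matrix.mulVec, dotProduct, Fintype.sum_prod_type,
      Matrix.kroneckerMap_apply, Matrix.one_apply, mul_ite, mul_one, mul_zero, ite_mul, zero_mul,
      Finset.sum_ite_eq, Finset.mem_univ, if_true]
  have key : ‖(EuclideanSpace.equiv (p × q) ℂ).symm ((A ⊗ₖ (1 : Matrix q q ℂ)) *ᵥ x)‖ ^ 2
      ≤ (‖A‖ * ‖x‖) ^ 2 := by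
    rw [euclidean_sq_norm]
    have hx : ‖x‖ ^ 2 = ∑ ij : p × q, ‖x ij‖ ^ 2 := by
      rw [EuclideanSpace.norm_eq, Real.sq_sqrt (by positivity)]
    calc ∑ ij : p × q, ‖((A ⊗ₖ (1 : Matrix q q ℂ)) *ᵥ x) ij‖ ^ 2
        = ∑ j : q, ∑ i : p, ‖(A *ᵥ fun k => x (k, j)) i‖ ^ 2 := by
          rw [Fintype.sum_prod_type, Finset.sum_comm]
          simp only [hy]
      _ ≤ ∑ j : q, (‖A‖ * ‖(EuclideanSpace.equiv p ℂ).symm (fun k => x (k, j))‖) ^ 2 := by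
          apply Finset.sum_le_sum
          intro j _
          rw [← euclidean_sq_norm]
          apply pow_le_pow_left₀ (norm_nonneg _)
          exact Matrix.l2_opNorm_mulVec A ((EuclideanSpace.equiv p ℂ).symm fun k => x (k, j))
      _ = ‖A‖ ^ 2 * ∑ j : q, ‖(EuclideanSpace.equiv p ℂ).symm (fun k => x (k, j))‖ ^ 2 := by
          rw [Finset.mul_sum]
          apply Finset.sum_congr rfl
          intro j _; ring
      _ = ‖A‖ ^ 2 * ∑ j : q, ∑ i : p, ‖x (i, j)‖ ^ 2 := by
          congr 1
          apply Finset.sum_congr rfl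
          intro j _; rw [euclidean_sq_norm]
      _ = (‖A‖ * ‖x‖) ^ 2 := by
          rw [mul_pow, hx, Fintype.sum_prod_type]
          congr 1
          exact Finset.sum_comm
  have h0 : (0:ℝ) ≤ ‖A‖ * ‖x‖ := by positivity
  nlinarith [norm_nonneg ((EuclideanSpace.equiv (p × q) ℂ).symm
    ((A ⊗ₖ (1 : Matrix q q ℂ)) *ᵥ x)), key, h0]

lemma kron_one_mem_unitary {m : ℕ} {U : Matrix (Fin 4) (Fin 4) ℂ}
    (h : U ∈ Matrix.unitaryGroup (Fin 4) ℂ) :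
    U ⊗ₖ (1 : Matrix (Fin m) (Fin m) ℂ) ∈ Matrix.unitaryGroup (Fin 4 × Fin m) ℂ := by
  rw [Matrix.mem_unitaryGroup_iff]
  have hU : U * star U = 1 := Matrix.mem_unitaryGroup_iff.mp h
  have hstar : star (U ⊗ₖ (1 : Matrix (Fin m) (Fin m) ℂ))
      = (star U) ⊗ₖ (1 : Matrix (Fin m) (Fin m) ℂ) := by
    ext ⟨i, j⟩ ⟨k, l⟩
    simp [Matrix.star_eq_conjTranspose, Matrix.conjTranspose_apply, Matrix.kroneckerMap_apply,
      Matrix.one_apply, apply_ite (star : ℂ → ℂ), eq_comm]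
  rw [hstar, ← Matrix.mul_kronecker_mul, hU, Matrix.one_mul, Matrix.one_kronecker_one]

lemma circuit_mem_unitary {m : ℕ} (V : ℕ → Matrix (Fin 4 × Fin m) (Fin 4 × Fin m) ℂ)
    (U : ℕ → Matrix (Fin 4) (Fin 4) ℂ) (t : ℕ)
    (hV : ∀ s ≤ t, V s ∈ Matrix.unitaryGroup (Fin 4 × Fin m) ℂ)
    (hU : ∀ s < t, U s ∈ Matrix.unitaryGroup (Fin 4) ℂ) :
    circuit V U t ∈ Matrix.unitaryGroup (Fin 4 × Fin m) ℂ := by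
  induction t with
  | zero => simpa [circuit] using hV 0 le_rfl
  | succ t ih =>
    show V (t + 1) * (U t ⊗ₖ (1 : Matrix (Fin m) (Fin m) ℂ)) * circuit V U t ∈ _
    exact mul_mem (mul_mem (hV _ le_rfl) (kron_one_mem_unitary (hU t (Nat.lt_succ_self t))))
      (ih (fun s hs => hV s (hs.trans (Nat.le_succ t))) (fun s hs => hU s (hs.trans (Nat.lt_succ_self t))))

lemma circuit_lipschitz {m : ℕ} (hm : 0 < m) (V : ℕ → Matrix (Fin 4 × Fin m) (Fin 4 × Fin m) ℂ)
    (U U' : ℕ → Matrix (Fin 4) (Fin 4) ℂ) (t : ℕ)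
    (hV : ∀ s ≤ t, V s ∈ Matrix.unitaryGroup (Fin 4 × Fin m) ℂ)
    (hU : ∀ s < t, U s ∈ Matrix.unitaryGroup (Fin 4) ℂ)
    (hU' : ∀ s < t, U' s ∈ Matrix.unitaryGroup (Fin 4) ℂ) :
    ‖circuit V U t - circuit V U' t‖ ≤ ∑ s ∈ Finset.range t, ‖U s - U' s‖ := by
  haveI : NeZero m := ⟨hm.ne'⟩
  induction t with
  | zero => simp [circuit]
  | succ t ih =>
    have hVt : ∀ s ≤ t, V s ∈ Matrix.unitaryGroup (Fin 4 × Fin m) ℂ :=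
      fun s hs => hV s (hs.trans (Nat.le_succ t))
    have hUt : ∀ s < t, U s ∈ Matrix.unitaryGroup (Fin 4) ℂ :=
      fun s hs => hU s (hs.trans (Nat.lt_succ_self t))
    have hU't : ∀ s < t, U' s ∈ Matrix.unitaryGroup (Fin 4) ℂ :=
      fun s hs => hU' s (hs.trans (Nat.lt_succ_self t))
    have hid : circuit V U (t + 1) - circuit V U' (t + 1)
        = V (t + 1) * ((U t ⊗ₖ (1 : Matrix (Fin m) (Fin m) ℂ)) * (circuit V U t - circuit V U' t))
          + V (t + 1) * (((U t - U' t) ⊗ₖ (1 : Matrix (Fin m) (Fin m) ℂ)) * circuit V U' t) := by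
      have hsub : (U t - U' t) ⊗ₖ (1 : Matrix (Fin m) (Fin m) ℂ)
          = U t ⊗ₖ (1 : Matrix (Fin m) (Fin m) ℂ) - U' t ⊗ₖ (1 : Matrix (Fin m) (Fin m) ℂ) := by
        ext ⟨i, j⟩ ⟨k, l⟩
        simp [Matrix.kroneckerMap_apply, sub_mul]
      show circuit V U t.succ - circuit V U' t.succ = _
      simp only [circuit, hsub]
      noncomm_ring
    rw [hid, Finset.sum_range_succ]
    have hnV : ‖V (t + 1)‖ = 1 := norm_of_unitary (hV _ le_rfl)
    have hnU : ‖U t ⊗ₖ (1 : Matrix (Fin m) (Fin m) ℂ)‖ ≤ 1 := by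
      have := kron_one_norm_le (q := Fin m) (U t)
      rw [norm_of_unitary (hU t (Nat.lt_succ_self t))] at this
      exact this
    have hnC : ‖circuit V U' t‖ = 1 :=
      norm_of_unitary (circuit_mem_unitary V U' t hVt hU't)
    have ihb := ih hVt hUt hU't
    have e0 : ∀ W : Matrix (Fin 4 × Fin m) (Fin 4 × Fin m) ℂ, ‖V (t + 1) * W‖ ≤ ‖W‖ := by
      intro W
      calc ‖V (t + 1) * W‖ ≤ ‖V (t + 1)‖ * ‖W‖ := Matrix.l2_opNorm_mul _ _
        _ = ‖W‖ := by rw [hnV, one_mul]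
    have e1 : ‖(U t ⊗ₖ (1 : Matrix (Fin m) (Fin m) ℂ)) * (circuit V U t - circuit V U' t)‖
        ≤ ∑ s ∈ Finset.range t, ‖U s - U' s‖ := by
      calc ‖(U t ⊗ₖ (1 : Matrix (Fin m) (Fin m) ℂ)) * (circuit V U t - circuit V U' t)‖
          ≤ ‖U t ⊗ₖ (1 : Matrix (Fin m) (Fin m) ℂ)‖ * ‖circuit V U t - circuit V U' t‖ :=
            Matrix.l2_opNorm_mul _ _
        _ ≤ 1 * (∑ s ∈ Finset.range t, ‖U s - U' s‖) :=
            mul_le_mul hnU ihb (norm_nonneg _) zero_le_one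
        _ = ∑ s ∈ Finset.range t, ‖U s - U' s‖ := one_mul _
    have e2 : ‖((U t - U' t) ⊗ₖ (1 : Matrix (Fin m) (Fin m) ℂ)) * circuit V U' t‖
        ≤ ‖U t - U' t‖ := by
      calc ‖((U t - U' t) ⊗ₖ (1 : Matrix (Fin m) (Fin m) ℂ)) * circuit V U' t‖
          ≤ ‖(U t - U' t) ⊗ₖ (1 : Matrix (Fin m) (Fin m) ℂ)‖ * ‖circuit V U' t‖ :=
            Matrix.l2_opNorm_mul _ _
        _ = ‖(U t - U' t) ⊗ₖ (1 : Matrix (Fin m) (Fin m) ℂ)‖ := by rw [hnC, mul_one]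
        _ ≤ ‖U t - U' t‖ := kron_one_norm_le _
    calc ‖V (t + 1) * ((U t ⊗ₖ (1 : Matrix (Fin m) (Fin m) ℂ)) * (circuit V U t - circuit V U' t))
          + V (t + 1) * (((U t - U' t) ⊗ₖ (1 : Matrix (Fin m) (Fin m) ℂ)) * circuit V U' t)‖
        ≤ ‖V (t + 1) * ((U t ⊗ₖ (1 : Matrix (Fin m) (Fin m) ℂ)) * (circuit V U t - circuit V U' t))‖
          + ‖V (t + 1) * (((U t - U' t) ⊗ₖ (1 : Matrix (Fin m) (Fin m) ℂ)) * circuit V U' t)‖ :=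
          norm_add_le _ _
      _ ≤ (∑ s ∈ Finset.range t, ‖U s - U' s‖) + ‖U t - U' t‖ :=
          add_le_add ((e0 _).trans e1) ((e0 _).trans e2)

end Aux

open scoped Matrix.Norms.L2Operator

/-- Metric entropy bound for variational unitary circuits: the image of the circuit map admits,
for every `ε ∈ (0,1]`, an `ε`-covering net (in spectral norm) inside the image, of cardinality
at most `(6T/ε)^{32T}`. -/
theorem circuit_covering_number (m T : ℕ) (hm : 0 < m) (hT : 0 < T)
    (V : ℕ → Matrix (Fin 4 × Fin m) (Fin 4 × Fin m) ℂ)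
    (hV : ∀ s ≤ T, V s ∈ Matrix.unitaryGroup (Fin 4 × Fin m) ℂ)
    (ε : ℝ) (hε0 : 0 < ε) (hε1 : ε ≤ 1) :
    ∃ 𝒩 : Finset (Matrix (Fin 4 × Fin m) (Fin 4 × Fin m) ℂ),
      (∀ W ∈ 𝒩, ∃ U : ℕ → Matrix (Fin 4) (Fin 4) ℂ,
        (∀ t < T, U t ∈ Matrix.unitaryGroup (Fin 4) ℂ) ∧ W = circuit V U T) ∧
      (𝒩.card : ℝ) ≤ (6 * T / ε) ^ (32 * T) ∧
      (∀ U : ℕ → Matrix (Fin 4) (Fin 4) ℂ, (∀ t < T, U t ∈ Matrix.unitaryGroup (Fin 4) ℂ) →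
        ∃ W ∈ 𝒩, opNorm (circuit V U T - W) ≤ ε) := by
  classical
  haveI : NeZero m := ⟨hm.ne'⟩
  have hopNorm : ∀ A : Matrix (Fin 4 × Fin m) (Fin 4 × Fin m) ℂ, opNorm A = ‖A‖ := fun _ => rfl
  have hT' : (0:ℝ) < T := by exact_mod_cast hT
  set δ : ℝ := ε / (2 * T) with hδ
  have hδ0 : 0 < δ := by positivity
  have hδ1 : δ ≤ 1 := by
    rw [hδ, div_le_one (by positivity)]
    have h1T : (1:ℝ) ≤ T := by exact_mod_cast hT
    nlinarith
  have hK : (Matrix.unitaryGroup (Fin 4) ℂ : Set (Matrix (Fin 4) (Fin 4) ℂ))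
      ⊆ Metric.closedBall 0 1 := by
    intro A hA
    rw [Metric.mem_closedBall, dist_zero_right, norm_of_unitary hA]
  obtain ⟨s₀, hs₀K, hs₀card, hs₀cov⟩ := exists_net (Matrix (Fin 4) (Fin 4) ℂ) _ hK hδ0 hδ1
  have hrank : Module.finrank ℝ (Matrix (Fin 4) (Fin 4) ℂ) = 32 := by
    rw [Module.finrank_matrix]
    simp [Complex.finrank_real_complex]
  rw [hrank] at hs₀card
  have hδval : 3 / δ = 6 * T / ε := by
    rw [hδ]
    field_simp
    ring
  rw [hδval] at hs₀card
  set pad : (Fin T → Matrix (Fin 4) (Fin 4) ℂ) → ℕ → Matrix (Fin 4) (Fin 4) ℂ :=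
    fun f t => if h : t < T then f ⟨t, h⟩ else 1 with hpad
  refine ⟨(Fintype.piFinset (fun _ : Fin T => s₀)).image (fun f => circuit V (pad f) T),
    ?_, ?_, ?_⟩
  · intro W hW
    obtain ⟨f, hf, rfl⟩ := Finset.mem_image.mp hW
    refine ⟨pad f, ?_, rfl⟩
    intro t ht
    have hmem : f ⟨t, ht⟩ ∈ s₀ := (Fintype.mem_piFinset.mp hf) _
    have := hs₀K hmem
    simpa [hpad, dif_pos ht] using this
  · calc (((Fintype.piFinset (fun _ : Fin T => s₀)).image
          (fun f => circuit V (pad f) T)).card : ℝ)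
        ≤ ((Fintype.piFinset (fun _ : Fin T => s₀)).card : ℝ) := by
          exact_mod_cast Finset.card_image_le
      _ = (s₀.card : ℝ) ^ T := by
          rw [Fintype.card_piFinset]
          push_cast
          simp [Finset.prod_const]
      _ ≤ ((6 * T / ε) ^ 32) ^ T := pow_le_pow_left₀ (by positivity) hs₀card T
      _ = (6 * T / ε) ^ (32 * T) := by rw [← pow_mul]
  · intro U hU
    have hchoice : ∀ i : Fin T, ∃ y ∈ s₀, dist (U i) y ≤ δ :=
      fun i => hs₀cov (U i) (hU i i.isLt)
    choose r hr hd using hchoice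
    refine ⟨circuit V (pad r) T,
      Finset.mem_image.mpr ⟨r, Fintype.mem_piFinset.mpr hr, rfl⟩, ?_⟩
    rw [hopNorm]
    have hU' : ∀ t < T, pad r t ∈ Matrix.unitaryGroup (Fin 4) ℂ := by
      intro t ht
      have := hs₀K (hr ⟨t, ht⟩)
      simpa [hpad, dif_pos ht] using this
    calc ‖circuit V U T - circuit V (pad r) T‖
        ≤ ∑ s ∈ Finset.range T, ‖U s - pad r s‖ :=
          circuit_lipschitz hm V U (pad r) T hV hU hU'
      _ ≤ ∑ _s ∈ Finset.range T, δ := by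
          apply Finset.sum_le_sum
          intro s hs
          have hsT : s < T := Finset.mem_range.mp hs
          have hds := hd ⟨s, hsT⟩
          rw [dist_eq_norm] at hds
          simpa [hpad, dif_pos hsT] using hds
      _ = T * δ := by rw [Finset.sum_const, Finset.card_range, nsmul_eq_mul]
      _ ≤ ε := by
          have heq : (T:ℝ) * δ = ε / 2 := by
            rw [hδ]
            field_simp
          rw [heq]
          linarith
end

section
/- Metric entropy bound for gate-sharing unitary circuits in spectral norm: let m, T, L be positive integers, let g : {1,…,L} → {1,…,T} and positive integers M_1,…,M_T be such that for each t the number of layers s with g(s) = t is at most M_t, let V_0,…,V_L ∈ U(4m) be fixed unitaries, and define F : U(4)^T → U(4m) by F(U_1,…,U_T) = V_L (U_{g(L)} ⊗ I_m) V_{L−1} ⋯ V_1 (U_{g(1)} ⊗ I_m) V_0. Then for every ε ∈ (0,1] there exists a finite set 𝒩 of complex (4m)×(4m) matrices contained in the image of F such that log |𝒩| ≤ 32 ( T log(6T/ε) + Σ_{t=1}^T log M_t ) and for every θ ∈ U(4)^T there exists W ∈ 𝒩 with ‖F(θ) − W‖ ≤ ε in the ℓ²-operator norm. -/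
open Matrix
open scoped Kronecker

open MeasureTheory Metric Module
open scoped ENNReal Matrix.Norms.L2Operator
set_option maxHeartbeats 1000000

lemma exists_internal_net {E : Type*} [NormedAddCommGroup E] [NormedSpace ℝ E]
    [MeasurableSpace E] [BorelSpace E] [FiniteDimensional ℝ E]
    (s : Set E) (hs : s ⊆ closedBall (0 : E) 1) {δ : ℝ} (hδ0 : 0 < δ) (hδ1 : δ ≤ 1) :
    ∃ N : Finset E, ↑N ⊆ s ∧ (N.card : ℝ) ≤ (3 / δ) ^ (finrank ℝ E) ∧
      ∀ x ∈ s, ∃ y ∈ N, ‖x - y‖ ≤ δ := by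
  classical
  set d := finrank ℝ E with hd
  set μ : Measure E := (finBasis ℝ E).addHaar with hμ
  have hb0 : (0:ℝ) < δ / 2 := by linarith
  have hball_pos : 0 < μ (ball (0:E) (δ/2)) := measure_ball_pos μ 0 hb0
  have hball_fin : μ (ball (0:E) (δ/2)) < ⊤ := measure_ball_lt_top
  have key : ∀ P : Finset E, ↑P ⊆ s → (∀ x ∈ P, ∀ y ∈ P, x ≠ y → δ < ‖x - y‖) →
      (P.card : ℝ) ≤ (3/δ) ^ d := by
    intro P hPs hPsep
    have hdisj : (P : Set E).PairwiseDisjoint (fun p => ball p (δ/2)) := by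
      intro x hx y hy hxy
      refine Set.disjoint_left.2 fun z hz1 hz2 => ?_
      have h1 : dist z x < δ/2 := mem_ball.1 hz1
      have h2 : dist z y < δ/2 := mem_ball.1 hz2
      have h3 : δ < dist x y := by rw [dist_eq_norm]; exact hPsep x hx y hy hxy
      have h4 : dist x y ≤ dist z x + dist z y := dist_triangle_left x y z
      linarith
    have hsum : μ (⋃ p ∈ P, ball p (δ/2)) = ∑ p ∈ P, μ (ball p (δ/2)) :=
      measure_biUnion_finset hdisj fun p _ => measurableSet_ball
    have hsub : (⋃ p ∈ P, ball p (δ/2)) ⊆ ball (0:E) ((3/δ) * (δ/2)) := by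
      intro z hz
      simp only [Set.mem_iUnion] at hz
      obtain ⟨p, hp, hzp⟩ := hz
      have hp1 : ‖p‖ ≤ 1 := by simpa using hs (hPs hp)
      have hzp' : dist z p < δ/2 := mem_ball.1 hzp
      have htri : dist z 0 ≤ dist z p + ‖p‖ := by
        simpa [dist_zero_right] using dist_triangle z p 0
      have h32 : (3/δ) * (δ/2) = 3/2 := by field_simp
      refine mem_ball.2 ?_
      rw [h32]
      linarith
    have hcard : (P.card : ℝ≥0∞) * μ (ball (0:E) (δ/2)) ≤
        ENNReal.ofReal ((3/δ)^d) * μ (ball (0:E) (δ/2)) := by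
      calc (P.card : ℝ≥0∞) * μ (ball (0:E) (δ/2))
          = ∑ p ∈ P, μ (ball p (δ/2)) := by
            rw [Finset.sum_congr rfl fun p _ => Measure.addHaar_ball_center μ p (δ/2)]
            simp [Finset.sum_const, nsmul_eq_mul]
        _ = μ (⋃ p ∈ P, ball p (δ/2)) := hsum.symm
        _ ≤ μ (ball (0:E) ((3/δ) * (δ/2))) := measure_mono hsub
        _ = ENNReal.ofReal ((3/δ)^d) * μ (ball (0:E) (δ/2)) := by
            rw [Measure.addHaar_ball_mul_of_pos μ _ (by positivity)]
    have hle : (P.card : ℝ≥0∞) ≤ ENNReal.ofReal ((3/δ)^d) :=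
      (ENNReal.mul_le_mul_iff_left (ne_of_gt hball_pos) (ne_of_lt hball_fin)).mp hcard
    have : ENNReal.ofReal (P.card : ℝ) ≤ ENNReal.ofReal ((3/δ)^d) := by
      rwa [ENNReal.ofReal_natCast]
    exact (ENNReal.ofReal_le_ofReal_iff (by positivity)).mp this
  -- maximal separated set
  set K : ℕ := Nat.floor ((3/δ)^d) with hK
  have keyK : ∀ P : Finset E, ↑P ⊆ s → (∀ x ∈ P, ∀ y ∈ P, x ≠ y → δ < ‖x - y‖) →
      P.card ≤ K := fun P h1 h2 => Nat.le_floor (key P h1 h2)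
  set Q : ℕ → Prop := fun n => ∃ P : Finset E, ↑P ⊆ s ∧
    (∀ x ∈ P, ∀ y ∈ P, x ≠ y → δ < ‖x - y‖) ∧ P.card = n with hQ
  have hQ0 : Q 0 := ⟨∅, by simp, by simp, rfl⟩
  set n₀ := Nat.findGreatest Q K with hn₀
  have hQn₀ : Q n₀ := Nat.findGreatest_spec (Nat.zero_le K) hQ0
  obtain ⟨N, hNs, hNsep, hNcard⟩ := hQn₀
  refine ⟨N, hNs, hNcard ▸ key N hNs hNsep, ?_⟩
  intro x hx
  by_contra hcon
  push_neg at hcon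
  have hcon' : ∀ y ∈ N, δ < ‖x - y‖ := fun y hy => hcon y hy
  have hxN : x ∉ N := fun h => by have := hcon' x h; simp at this; linarith
  have hQs : Q (n₀ + 1) := by
    refine ⟨insert x N, ?_, ?_, by rw [Finset.card_insert_of_notMem hxN, hNcard]⟩
    · intro z hz
      rcases Finset.mem_insert.1 (by exact_mod_cast hz) with h | h
      · exact h ▸ hx
      · exact hNs h
    · intro a ha b hb hab
      rcases Finset.mem_insert.1 ha with rfl | ha
      · rcases Finset.mem_insert.1 hb with rfl | hb
        · exact absurd rfl hab
        · exact hcon' b hb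
      · rcases Finset.mem_insert.1 hb with h | hb
        · rw [h, norm_sub_rev]; exact hcon' a ha
        · exact hNsep a ha b hb hab
  obtain ⟨P', hP1, hP2, hP3⟩ := hQs
  have h1 : n₀ + 1 ≤ K := hP3 ▸ keyK P' hP1 hP2
  exact Nat.findGreatest_is_greatest (Nat.lt_succ_self n₀) h1 ⟨P', hP1, hP2, hP3⟩


lemma opNorm_eq {n : Type*} [Fintype n] [DecidableEq n] (A : Matrix n n ℂ) : opNorm A = ‖A‖ := rfl

lemma norm_unitary {n : Type*} [Fintype n] [DecidableEq n] [Nonempty n]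
    {A : Matrix n n ℂ} (h : A ∈ Matrix.unitaryGroup n ℂ) : ‖A‖ = 1 :=
  CStarRing.norm_of_mem_unitary h

lemma euclid_norm_sq {ι : Type*} [Fintype ι] (v : EuclideanSpace ℂ ι) :
    ‖v‖ ^ 2 = ∑ i, ‖v i‖ ^ 2 := by
  rw [EuclideanSpace.norm_eq, Real.sq_sqrt (Finset.sum_nonneg fun _ _ => by positivity)]

lemma kron_one_norm {m : ℕ} [NeZero m] (A : Matrix (Fin 4) (Fin 4) ℂ) :
    ‖A ⊗ₖ (1 : Matrix (Fin m) (Fin m) ℂ)‖ ≤ ‖A‖ := by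
  rw [l2_opNorm_def]
  refine ContinuousLinearMap.opNorm_le_bound _ (norm_nonneg A) fun x => ?_
  -- the applied CLM is the mulVec
  have happ : (toEuclideanLin (𝕜 := ℂ) (m := Fin 4 × Fin m) (n := Fin 4 × Fin m)).trans LinearMap.toContinuousLinearMap
      (A ⊗ₖ (1 : Matrix (Fin m) (Fin m) ℂ)) x =
      (WithLp.equiv 2 _).symm ((A ⊗ₖ (1 : Matrix (Fin m) (Fin m) ℂ)) *ᵥ (WithLp.equiv 2 _ x)) := rfl
  rw [happ]
  have hentry : ∀ i j, ((A ⊗ₖ (1 : Matrix (Fin m) (Fin m) ℂ)) *ᵥ (WithLp.equiv 2 _ x)) (i, j)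
      = (A *ᵥ fun k => x (k, j)) i := by
    intro i j
    simp only [mulVec, dotProduct, kroneckerMap_apply, Fintype.sum_prod_type, Matrix.one_apply,
      mul_ite, mul_one, mul_zero, ite_mul, zero_mul]
    simp only [Finset.sum_ite_eq, Finset.mem_univ, if_true]
    rfl
  have key : ‖(WithLp.equiv 2 _).symm ((A ⊗ₖ (1 : Matrix (Fin m) (Fin m) ℂ)) *ᵥ (WithLp.equiv 2 _ x))‖ ^ 2
      ≤ (‖A‖ * ‖x‖) ^ 2 := by
    rw [euclid_norm_sq]
    have : ∀ p : Fin 4 × Fin m,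
        ‖((WithLp.equiv 2 _).symm ((A ⊗ₖ (1 : Matrix (Fin m) (Fin m) ℂ)) *ᵥ (WithLp.equiv 2 _ x)) : EuclideanSpace ℂ (Fin 4 × Fin m)) p‖
        = ‖(A *ᵥ fun k => x (k, p.2)) p.1‖ := fun p => congrArg norm (hentry p.1 p.2)
    calc ∑ p : Fin 4 × Fin m, ‖((WithLp.equiv 2 _).symm ((A ⊗ₖ (1 : Matrix (Fin m) (Fin m) ℂ)) *ᵥ (WithLp.equiv 2 _ x)) : EuclideanSpace ℂ (Fin 4 × Fin m)) p‖ ^ 2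
        = ∑ j : Fin m, ∑ i : Fin 4, ‖(A *ᵥ fun k => x (k, j)) i‖ ^ 2 := by
          rw [Finset.sum_congr rfl fun p _ => by rw [this p]]
          rw [Fintype.sum_prod_type]
          exact Finset.sum_comm
      _ = ∑ j : Fin m, ‖((WithLp.equiv 2 _).symm (A *ᵥ fun k => x (k, j)) : EuclideanSpace ℂ (Fin 4))‖ ^ 2 := by
          refine Finset.sum_congr rfl fun j _ => ?_
          rw [euclid_norm_sq]
          rfl
      _ ≤ ∑ j : Fin m, (‖A‖ * ‖((WithLp.equiv 2 _).symm (fun k => x (k, j)) : EuclideanSpace ℂ (Fin 4))‖) ^ 2 := by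
          refine Finset.sum_le_sum fun j _ => ?_
          have := Matrix.l2_opNorm_mulVec A ((WithLp.equiv 2 _).symm (fun k => x (k, j)))
          have h2 : ((WithLp.equiv 2 (Fin 4 → ℂ)) ((WithLp.equiv 2 _).symm (fun k => x (k, j)))) = fun k => x (k, j) := rfl
          rw [show (A *ᵥ fun k => x (k, j)) = A *ᵥ ((WithLp.equiv 2 (Fin 4 → ℂ)) ((WithLp.equiv 2 _).symm (fun k => x (k, j)))) from by rw [h2]]
          exact pow_le_pow_left₀ (norm_nonneg _) this 2
      _ ≤ (‖A‖ * ‖x‖) ^ 2 := by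
          simp only [mul_pow]
          rw [← Finset.mul_sum]
          refine mul_le_mul_of_nonneg_left ?_ (by positivity)
          rw [euclid_norm_sq x, Fintype.sum_prod_type]
          rw [Finset.sum_comm]
          refine le_of_eq (Finset.sum_congr rfl fun j _ => ?_)
          rw [euclid_norm_sq]
          rfl
  have h0 : 0 ≤ ‖A‖ * ‖x‖ := by positivity
  nlinarith [norm_nonneg ((WithLp.equiv 2 _).symm ((A ⊗ₖ (1 : Matrix (Fin m) (Fin m) ℂ)) *ᵥ (WithLp.equiv 2 _ x)) : EuclideanSpace ℂ (Fin 4 × Fin m))]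

lemma sub_kron {m : ℕ} (A B : Matrix (Fin 4) (Fin 4) ℂ) :
    (A - B) ⊗ₖ (1 : Matrix (Fin m) (Fin m) ℂ) = A ⊗ₖ (1 : Matrix (Fin m) (Fin m) ℂ) - B ⊗ₖ (1 : Matrix (Fin m) (Fin m) ℂ) := by
  ext ⟨i, j⟩ ⟨k, l⟩
  simp [kroneckerMap_apply, sub_mul]

lemma circuit_norm_le {m : ℕ} [NeZero m] (V : ℕ → Matrix (Fin 4 × Fin m) (Fin 4 × Fin m) ℂ)
    (U : ℕ → Matrix (Fin 4) (Fin 4) ℂ) (ℓ : ℕ)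
    (hV : ∀ s ≤ ℓ, ‖V s‖ ≤ 1) (hU : ∀ s < ℓ, ‖U s‖ ≤ 1) : ‖circuit V U ℓ‖ ≤ 1 := by
  induction ℓ with
  | zero => exact hV 0 le_rfl
  | succ t ih =>
    have h1 : ‖V (t+1)‖ ≤ 1 := hV (t+1) le_rfl
    have h2 : ‖U t ⊗ₖ (1 : Matrix (Fin m) (Fin m) ℂ)‖ ≤ 1 :=
      (kron_one_norm (U t)).trans (hU t (Nat.lt_succ_self t))
    have h3 : ‖circuit V U t‖ ≤ 1 :=
      ih (fun s hs => hV s (hs.trans (Nat.le_succ t))) (fun s hs => hU s (hs.trans (Nat.lt_succ_self t)))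
    calc ‖circuit V U (t+1)‖
        ≤ ‖V (t+1) * (U t ⊗ₖ (1 : Matrix (Fin m) (Fin m) ℂ))‖ * ‖circuit V U t‖ := l2_opNorm_mul _ _
      _ ≤ (‖V (t+1)‖ * ‖U t ⊗ₖ (1 : Matrix (Fin m) (Fin m) ℂ)‖) * ‖circuit V U t‖ :=
          mul_le_mul_of_nonneg_right (l2_opNorm_mul _ _) (norm_nonneg _)
      _ ≤ 1 := by
          have hab : ‖V (t+1)‖ * ‖U t ⊗ₖ (1 : Matrix (Fin m) (Fin m) ℂ)‖ ≤ 1 * 1 :=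
            mul_le_mul h1 h2 (norm_nonneg _) zero_le_one
          have := mul_le_mul hab h3 (norm_nonneg _) (by norm_num)
          simpa using this

lemma circuit_sub_norm {m : ℕ} [NeZero m] (V : ℕ → Matrix (Fin 4 × Fin m) (Fin 4 × Fin m) ℂ)
    (U U' : ℕ → Matrix (Fin 4) (Fin 4) ℂ) (ℓ : ℕ)
    (hV : ∀ s ≤ ℓ, ‖V s‖ ≤ 1) (hU : ∀ s < ℓ, ‖U s‖ ≤ 1) (hU' : ∀ s < ℓ, ‖U' s‖ ≤ 1) :
    ‖circuit V U ℓ - circuit V U' ℓ‖ ≤ ∑ s ∈ Finset.range ℓ, ‖U s - U' s‖ := by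
  induction ℓ with
  | zero => simp [circuit]
  | succ t ih =>
    have hV' : ∀ s ≤ t, ‖V s‖ ≤ 1 := fun s hs => hV s (hs.trans (Nat.le_succ t))
    have hUt : ∀ s < t, ‖U s‖ ≤ 1 := fun s hs => hU s (hs.trans (Nat.lt_succ_self t))
    have hU't : ∀ s < t, ‖U' s‖ ≤ 1 := fun s hs => hU' s (hs.trans (Nat.lt_succ_self t))
    have hC : ‖circuit V U t‖ ≤ 1 := circuit_norm_le V U t hV' hUt
    have hid : circuit V U (t+1) - circuit V U' (t+1)
        = V (t+1) * (((U t - U' t) ⊗ₖ (1 : Matrix (Fin m) (Fin m) ℂ)) * circuit V U t)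
          + V (t+1) * ((U' t ⊗ₖ (1 : Matrix (Fin m) (Fin m) ℂ)) * (circuit V U t - circuit V U' t)) := by
      show V (t+1) * (U t ⊗ₖ (1 : Matrix (Fin m) (Fin m) ℂ)) * circuit V U t
          - V (t+1) * (U' t ⊗ₖ (1 : Matrix (Fin m) (Fin m) ℂ)) * circuit V U' t = _
      rw [sub_kron]
      noncomm_ring
    rw [hid, Finset.sum_range_succ]
    have hb1 : ‖V (t+1) * (((U t - U' t) ⊗ₖ (1 : Matrix (Fin m) (Fin m) ℂ)) * circuit V U t)‖
        ≤ ‖U t - U' t‖ := by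
      have k1 := kron_one_norm (m := m) (U t - U' t)
      have e1 := l2_opNorm_mul (V (t+1)) (((U t - U' t) ⊗ₖ (1 : Matrix (Fin m) (Fin m) ℂ)) * circuit V U t)
      have e2 := l2_opNorm_mul ((U t - U' t) ⊗ₖ (1 : Matrix (Fin m) (Fin m) ℂ)) (circuit V U t)
      have h1 : ‖V (t+1)‖ ≤ 1 := hV (t+1) le_rfl
      calc ‖V (t+1) * (((U t - U' t) ⊗ₖ (1 : Matrix (Fin m) (Fin m) ℂ)) * circuit V U t)‖
          ≤ ‖V (t+1)‖ * ‖((U t - U' t) ⊗ₖ (1 : Matrix (Fin m) (Fin m) ℂ)) * circuit V U t‖ := e1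
        _ ≤ 1 * ‖((U t - U' t) ⊗ₖ (1 : Matrix (Fin m) (Fin m) ℂ)) * circuit V U t‖ :=
            mul_le_mul_of_nonneg_right h1 (norm_nonneg _)
        _ = ‖((U t - U' t) ⊗ₖ (1 : Matrix (Fin m) (Fin m) ℂ)) * circuit V U t‖ := one_mul _
        _ ≤ ‖(U t - U' t) ⊗ₖ (1 : Matrix (Fin m) (Fin m) ℂ)‖ * ‖circuit V U t‖ := e2
        _ ≤ ‖U t - U' t‖ * 1 := mul_le_mul k1 hC (norm_nonneg _) (norm_nonneg _)
        _ = ‖U t - U' t‖ := mul_one _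
    have hb2 : ‖V (t+1) * ((U' t ⊗ₖ (1 : Matrix (Fin m) (Fin m) ℂ)) * (circuit V U t - circuit V U' t))‖
        ≤ ∑ s ∈ Finset.range t, ‖U s - U' s‖ := by
      have k1 : ‖U' t ⊗ₖ (1 : Matrix (Fin m) (Fin m) ℂ)‖ ≤ 1 :=
        (kron_one_norm (U' t)).trans (hU' t (Nat.lt_succ_self t))
      have e1 := l2_opNorm_mul (V (t+1)) ((U' t ⊗ₖ (1 : Matrix (Fin m) (Fin m) ℂ)) * (circuit V U t - circuit V U' t))
      have e2 := l2_opNorm_mul (U' t ⊗ₖ (1 : Matrix (Fin m) (Fin m) ℂ)) (circuit V U t - circuit V U' t)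
      have h1 : ‖V (t+1)‖ ≤ 1 := hV (t+1) le_rfl
      have ihh := ih hV' hUt hU't
      calc ‖V (t+1) * ((U' t ⊗ₖ (1 : Matrix (Fin m) (Fin m) ℂ)) * (circuit V U t - circuit V U' t))‖
          ≤ ‖V (t+1)‖ * ‖(U' t ⊗ₖ (1 : Matrix (Fin m) (Fin m) ℂ)) * (circuit V U t - circuit V U' t)‖ := e1
        _ ≤ 1 * ‖(U' t ⊗ₖ (1 : Matrix (Fin m) (Fin m) ℂ)) * (circuit V U t - circuit V U' t)‖ :=
            mul_le_mul_of_nonneg_right h1 (norm_nonneg _)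
        _ = ‖(U' t ⊗ₖ (1 : Matrix (Fin m) (Fin m) ℂ)) * (circuit V U t - circuit V U' t)‖ := one_mul _
        _ ≤ ‖U' t ⊗ₖ (1 : Matrix (Fin m) (Fin m) ℂ)‖ * ‖circuit V U t - circuit V U' t‖ := e2
        _ ≤ 1 * (∑ s ∈ Finset.range t, ‖U s - U' s‖) :=
            mul_le_mul k1 ihh (norm_nonneg _) zero_le_one
        _ = ∑ s ∈ Finset.range t, ‖U s - U' s‖ := one_mul _
    calc ‖_ + _‖ ≤ _ + _ := norm_add_le _ _
      _ ≤ ‖U t - U' t‖ + ∑ s ∈ Finset.range t, ‖U s - U' s‖ := add_le_add hb1 hb2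
      _ = (∑ s ∈ Finset.range t, ‖U s - U' s‖) + ‖U t - U' t‖ := add_comm _ _


/-- Metric entropy bound for gate-sharing unitary circuits: `T` independently parameterized
2-qubit gates, gate `t` reused at most `M t` times over `L` layers (layer `s` applies gate
`g s`); the image of the circuit map admits an `ε`-covering net `𝒩` inside the image with
`log |𝒩| ≤ 32 (T log(6T/ε) + Σ_t log M_t)`. -/
theorem gate_sharing_circuit_covering_number (m T L : ℕ) (hm : 0 < m) (hT : 0 < T) (hL : 0 < L)
    (g : ℕ → ℕ) (hg : ∀ s < L, g s < T)
    (M : ℕ → ℕ) (hMpos : ∀ t < T, 0 < M t)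
    (hM : ∀ t < T, ((Finset.range L).filter fun s => g s = t).card ≤ M t)
    (V : ℕ → Matrix (Fin 4 × Fin m) (Fin 4 × Fin m) ℂ)
    (hV : ∀ s ≤ L, V s ∈ Matrix.unitaryGroup (Fin 4 × Fin m) ℂ)
    (ε : ℝ) (hε0 : 0 < ε) (hε1 : ε ≤ 1) :
    ∃ 𝒩 : Finset (Matrix (Fin 4 × Fin m) (Fin 4 × Fin m) ℂ),
      (∀ W ∈ 𝒩, ∃ U : ℕ → Matrix (Fin 4) (Fin 4) ℂ,
        (∀ t < T, U t ∈ Matrix.unitaryGroup (Fin 4) ℂ) ∧ W = circuit V (fun s => U (g s)) L) ∧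
      Real.log (𝒩.card) ≤
        32 * (T * Real.log (6 * T / ε) + ∑ t ∈ Finset.range T, Real.log (M t)) ∧
      (∀ U : ℕ → Matrix (Fin 4) (Fin 4) ℂ, (∀ t < T, U t ∈ Matrix.unitaryGroup (Fin 4) ℂ) →
        ∃ W ∈ 𝒩, opNorm (circuit V (fun s => U (g s)) L - W) ≤ ε) := by
  classical
  haveI : NeZero m := ⟨hm.ne'⟩
  haveI : Nonempty (Fin m) := ⟨⟨0, hm⟩⟩
  letI : MeasurableSpace (Matrix (Fin 4) (Fin 4) ℂ) := borel _
  haveI : BorelSpace (Matrix (Fin 4) (Fin 4) ℂ) := ⟨rfl⟩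
  have hdim : finrank ℝ (Matrix (Fin 4) (Fin 4) ℂ) = 32 := by
    rw [Module.finrank_matrix, Complex.finrank_real_complex]; norm_num
  have hVn : ∀ s ≤ L, ‖V s‖ ≤ 1 := fun s hs => le_of_eq (norm_unitary (hV s hs))
  -- scales
  set δ : ℕ → ℝ := fun t => ε / (T * M t) with hδdef
  have hδpos : ∀ t < T, 0 < δ t := by
    intro t ht
    have h1 : (0:ℝ) < T := by exact_mod_cast hT
    have h2 : (0:ℝ) < M t := by exact_mod_cast hMpos t ht
    exact div_pos hε0 (by positivity)
  have hδle : ∀ t < T, δ t ≤ 1 := by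
    intro t ht
    have h1 : (1:ℝ) ≤ T := by exact_mod_cast hT
    have h2 : (1:ℝ) ≤ M t := by exact_mod_cast hMpos t ht
    rw [div_le_one (by nlinarith)]
    nlinarith
  -- nets for each gate
  have hnets : ∀ t, t < T → ∃ N : Finset (Matrix (Fin 4) (Fin 4) ℂ),
      ↑N ⊆ (Matrix.unitaryGroup (Fin 4) ℂ : Set (Matrix (Fin 4) (Fin 4) ℂ)) ∧
      (N.card : ℝ) ≤ (3 / δ t) ^ 32 ∧
      ∀ x ∈ (Matrix.unitaryGroup (Fin 4) ℂ : Set (Matrix (Fin 4) (Fin 4) ℂ)),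
        ∃ y ∈ N, ‖x - y‖ ≤ δ t := by
    intro t ht
    obtain ⟨N, h1, h2, h3⟩ := exists_internal_net (E := Matrix (Fin 4) (Fin 4) ℂ)
      ((Matrix.unitaryGroup (Fin 4) ℂ : Set (Matrix (Fin 4) (Fin 4) ℂ)))
      (fun x hx => by
        rw [Metric.mem_closedBall, dist_zero_right]
        exact le_of_eq (norm_unitary hx)) (hδpos t ht) (hδle t ht)
    exact ⟨N, h1, by rwa [hdim] at h2, h3⟩
  set Ngood : ℕ → Finset (Matrix (Fin 4) (Fin 4) ℂ) := fun t =>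
    if h : t < T then (hnets t h).choose else {1} with hNgood
  have hNsub : ∀ t (ht : t < T), (Ngood t : Set (Matrix (Fin 4) (Fin 4) ℂ)) ⊆ (Matrix.unitaryGroup (Fin 4) ℂ : Set (Matrix (Fin 4) (Fin 4) ℂ)) := by
    intro t ht; rw [hNgood]; simp only [dif_pos ht]; exact (hnets t ht).choose_spec.1
  have hNcard : ∀ t (ht : t < T), ((Ngood t).card : ℝ) ≤ (3 / δ t) ^ 32 := by
    intro t ht; rw [hNgood]; simp only [dif_pos ht]; exact (hnets t ht).choose_spec.2.1
  have hNcover : ∀ t (ht : t < T), ∀ x ∈ (Matrix.unitaryGroup (Fin 4) ℂ : Set _),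
      ∃ y ∈ Ngood t, ‖x - y‖ ≤ δ t := by
    intro t ht; rw [hNgood]; simp only [dif_pos ht]; exact (hnets t ht).choose_spec.2.2
  have hNne : ∀ t (ht : t < T), (Ngood t).Nonempty := by
    intro t ht
    obtain ⟨y, hy, -⟩ := hNcover t ht 1 (Submonoid.one_mem _)
    exact ⟨y, hy⟩
  -- the function extending a pi-element
  set Ufun : (∀ t ∈ Finset.range T, Matrix (Fin 4) (Fin 4) ℂ) → ℕ → Matrix (Fin 4) (Fin 4) ℂ :=
    fun f t => if h : t < T then f t (Finset.mem_range.mpr h) else 1 with hUfun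
  set 𝒩 : Finset (Matrix (Fin 4 × Fin m) (Fin 4 × Fin m) ℂ) :=
    ((Finset.range T).pi (fun t => Ngood t)).image
      (fun f => circuit V (fun s => Ufun f (g s)) L) with h𝒩
  refine ⟨𝒩, ?_, ?_, ?_⟩
  · -- membership
    intro W hW
    rw [h𝒩, Finset.mem_image] at hW
    obtain ⟨f, hf, rfl⟩ := hW
    refine ⟨Ufun f, ?_, rfl⟩
    intro t ht
    rw [hUfun]
    simp only [dif_pos ht]
    exact hNsub t ht (Finset.mem_pi.mp hf t (Finset.mem_range.mpr ht))
  · -- cardinality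
    have hRHS0 : 0 ≤ 32 * (T * Real.log (6 * T / ε) + ∑ t ∈ Finset.range T, Real.log (M t)) := by
      have h1 : (1:ℝ) ≤ 6 * T / ε ∧ True := by
        constructor
        · rw [le_div_iff₀ hε0]
          have : (1:ℝ) ≤ T := by exact_mod_cast hT
          nlinarith
        · trivial
      have hlog1 : 0 ≤ Real.log (6 * T / ε) := Real.log_nonneg h1.1
      have hlog2 : ∀ t ∈ Finset.range T, 0 ≤ Real.log (M t) := by
        intro t ht
        exact Real.log_nonneg (by exact_mod_cast hMpos t (Finset.mem_range.mp ht))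
      have := Finset.sum_nonneg hlog2
      have hT0 : (0:ℝ) ≤ T := by positivity
      positivity
    rcases Nat.eq_zero_or_pos 𝒩.card with hc | hc
    · rw [hc]; simpa using hRHS0
    have hcle : (𝒩.card : ℝ) ≤ ∏ t ∈ Finset.range T, ((Ngood t).card : ℝ) := by
      have h1 : 𝒩.card ≤ ((Finset.range T).pi (fun t => Ngood t)).card := Finset.card_image_le
      have h2 : ((Finset.range T).pi (fun t => Ngood t)).card
          = ∏ t ∈ Finset.range T, (Ngood t).card := Finset.card_pi _ _
      calc (𝒩.card : ℝ) ≤ (((Finset.range T).pi (fun t => Ngood t)).card : ℝ) := by exact_mod_cast h1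
        _ = ∏ t ∈ Finset.range T, ((Ngood t).card : ℝ) := by rw [h2, Nat.cast_prod]
    have hfac : ∀ t ∈ Finset.range T, ((Ngood t).card : ℝ) ≠ 0 := by
      intro t ht
      have := (hNne t (Finset.mem_range.mp ht)).card_pos
      exact Nat.cast_ne_zero.mpr this.ne'
    calc Real.log 𝒩.card ≤ Real.log (∏ t ∈ Finset.range T, ((Ngood t).card : ℝ)) := by
          apply Real.log_le_log (by exact_mod_cast hc) hcle
      _ = ∑ t ∈ Finset.range T, Real.log ((Ngood t).card : ℝ) := Real.log_prod hfac
      _ ≤ ∑ t ∈ Finset.range T, 32 * (Real.log (6 * T / ε) + Real.log (M t)) := by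
          refine Finset.sum_le_sum fun t ht => ?_
          have ht' := Finset.mem_range.mp ht
          have hM1 : (0:ℝ) < M t := by exact_mod_cast hMpos t ht'
          have hT1 : (0:ℝ) < T := by exact_mod_cast hT
          have hNc1 : (0:ℝ) < (Ngood t).card := by
            have := (hNne t ht').card_pos; exact_mod_cast this
          have h3δ : 3 / δ t = 3 * T * M t / ε := by
            rw [hδdef]
            field_simp
          have hb : ((Ngood t).card : ℝ) ≤ (6 * T / ε * M t) ^ 32 := by
            refine (hNcard t ht').trans (pow_le_pow_left₀ (by positivity) ?_ 32)
            rw [h3δ]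
            have he : 6 * T / ε * M t = 6 * T * M t / ε := by ring
            rw [he]
            gcongr
            nlinarith
          calc Real.log ((Ngood t).card : ℝ) ≤ Real.log ((6 * T / ε * M t) ^ 32) :=
                Real.log_le_log hNc1 hb
            _ = 32 * Real.log (6 * T / ε * M t) := by
                rw [Real.log_pow]; push_cast; ring
            _ = 32 * (Real.log (6 * T / ε) + Real.log (M t)) := by
                rw [Real.log_mul (by positivity) (by positivity)]
      _ = 32 * (T * Real.log (6 * T / ε) + ∑ t ∈ Finset.range T, Real.log (M t)) := by
          simp only [mul_add, Finset.sum_add_distrib, Finset.sum_const, Finset.card_range,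
            nsmul_eq_mul, Finset.mul_sum]
          ring
  · -- covering
    intro U hU
    have hUn : ∀ t < T, ‖U t‖ ≤ 1 := fun t ht => le_of_eq (norm_unitary (hU t ht))
    have hpick : ∀ t, t < T → ∃ y ∈ Ngood t, ‖U t - y‖ ≤ δ t :=
      fun t ht => hNcover t ht (U t) (hU t ht)
    set f : ∀ t ∈ Finset.range T, Matrix (Fin 4) (Fin 4) ℂ :=
      fun t ht => (hpick t (Finset.mem_range.mp ht)).choose with hf
    have hfmem : f ∈ (Finset.range T).pi (fun t => Ngood t) := by
      rw [Finset.mem_pi]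
      intro t ht
      exact (hpick t (Finset.mem_range.mp ht)).choose_spec.1
    have hfclose : ∀ t (ht : t < T), ‖U t - Ufun f t‖ ≤ δ t := by
      intro t ht
      rw [hUfun]
      simp only [dif_pos ht]
      exact (hpick t ht).choose_spec.2
    have hfunit : ∀ t < T, Ufun f t ∈ Matrix.unitaryGroup (Fin 4) ℂ := by
      intro t ht
      rw [hUfun]; simp only [dif_pos ht]
      exact hNsub t ht ((hpick t ht).choose_spec.1)
    refine ⟨circuit V (fun s => Ufun f (g s)) L, ?_, ?_⟩
    · rw [h𝒩, Finset.mem_image]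
      exact ⟨f, hfmem, rfl⟩
    · rw [opNorm_eq]
      have hlip := circuit_sub_norm V (fun s => U (g s)) (fun s => Ufun f (g s)) L hVn
        (fun s hs => hUn (g s) (hg s hs))
        (fun s hs => le_of_eq (norm_unitary (hfunit (g s) (hg s hs))))
      refine hlip.trans ?_
      have hterm : ∀ s ∈ Finset.range L, ‖U (g s) - Ufun f (g s)‖ ≤ δ (g s) := by
        intro s hs
        exact hfclose (g s) (hg s (Finset.mem_range.mp hs))
      calc ∑ s ∈ Finset.range L, ‖U (g s) - Ufun f (g s)‖
          ≤ ∑ s ∈ Finset.range L, δ (g s) := Finset.sum_le_sum hterm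
        _ = ∑ t ∈ Finset.range T, ∑ s ∈ (Finset.range L).filter (fun s => g s = t), δ (g s) := by
            rw [Finset.sum_fiberwise_of_maps_to (fun s hs => Finset.mem_range.mpr (hg s (Finset.mem_range.mp hs)))]
        _ ≤ ∑ t ∈ Finset.range T, (ε / T) := by
            refine Finset.sum_le_sum fun t ht => ?_
            have ht' := Finset.mem_range.mp ht
            have hM1 : (0:ℝ) < M t := by exact_mod_cast hMpos t ht'
            have hT1 : (0:ℝ) < T := by exact_mod_cast hT
            have : ∑ s ∈ (Finset.range L).filter (fun s => g s = t), δ (g s)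
                = ((Finset.range L).filter (fun s => g s = t)).card * δ t := by
              rw [Finset.sum_congr rfl fun s hs => by rw [(Finset.mem_filter.mp hs).2]]
              rw [Finset.sum_const, nsmul_eq_mul]
            rw [this]
            have hcard : (((Finset.range L).filter (fun s => g s = t)).card : ℝ) ≤ M t := by
              exact_mod_cast hM t ht'
            have hδt : δ t = ε / (T * M t) := rfl
            calc (((Finset.range L).filter (fun s => g s = t)).card : ℝ) * δ t
                ≤ (M t : ℝ) * δ t := mul_le_mul_of_nonneg_right hcard (le_of_lt (hδpos t ht'))
              _ = ε / T := by rw [hδt]; field_simp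
        _ = ε := by
            rw [Finset.sum_const, Finset.card_range, nsmul_eq_mul]
            field_simp
end

section
/- Covering number bound for 2-qubit unitaries: let ‖·‖ be a norm on the space of complex 4×4 matrices that is unitarily invariant, i.e., ‖U A V‖ = ‖A‖ for all matrices A and all unitaries U, V ∈ U(4). Then for every ε with 0 < ε ≤ ‖I‖ (where I is the 4×4 identity matrix), there exists a finite subset 𝒩 ⊆ U(4) with cardinality |𝒩| ≤ (6‖I‖/ε)^{32} such that for every U ∈ U(4) there exists V ∈ 𝒩 with ‖U − V‖ ≤ ε. -/
open Matrix MeasureTheory Pointwise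
open scoped ENNReal NNReal
set_option linter.unusedSectionVars false

namespace CoveringAux

abbrev P := Fin 4 → Fin 4 → ℂ

noncomputable abbrev haarP : Measure P := (Module.finBasis ℝ P).addHaar

lemma finrankP : Module.finrank ℝ P = 32 := by
  simp [Module.finrank_pi_fintype]

section

variable (f : P → ℝ)
  (hadd : ∀ A B, f (A + B) ≤ f A + f B)
  (hsmul : ∀ (z : ℂ) (A), f (z • A) = ‖z‖ * f A)

include hsmul

lemma f_zero : f 0 = 0 := by simpa using hsmul 0 0

lemma f_real_smul (r : ℝ) (A : P) : f (r • A) = |r| * f A := by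
  have h : (r : ℂ) • A = r • A := by
    funext i j
    show (r : ℂ) * A i j = r • A i j
    exact Complex.real_smul.symm
  rw [← h, hsmul]
  simp

lemma f_neg (A : P) : f (-A) = f A := by
  have := f_real_smul f hsmul (-1) A
  simpa using this

include hadd

lemma f_nonneg (A : P) : 0 ≤ f A := by
  have h0 := f_zero f hsmul
  have h := hadd A (-A)
  rw [add_neg_cancel, h0, f_neg f hsmul] at h
  linarith

lemma f_sub_le (A B : P) : f A - f B ≤ f (A - B) := by
  have := hadd (A - B) B
  rw [sub_add_cancel] at this
  linarith

lemma f_sum {ι : Type*} (s : Finset ι) (g : ι → P) :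
    f (∑ i ∈ s, g i) ≤ ∑ i ∈ s, f (g i) := by
  classical
  induction s using Finset.cons_induction with
  | empty => simp [f_zero f hsmul]
  | cons a s ha ih =>
      rw [Finset.sum_cons, Finset.sum_cons]
      exact le_trans (hadd _ _) (by linarith)

lemma f_le_const_mul : ∃ C : ℝ, 0 ≤ C ∧ ∀ A, f A ≤ C * ‖A‖ := by
  refine ⟨∑ i, ∑ j, f (Pi.single i (Pi.single j (1:ℂ)) : P), ?_, ?_⟩
  · exact Finset.sum_nonneg fun i _ => Finset.sum_nonneg fun j _ =>
      f_nonneg f hadd hsmul _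
  · intro A
    have hA : A = ∑ i, ∑ j, A i j • (Pi.single i (Pi.single j (1:ℂ)) : P) := by
      funext i' j'
      rw [Finset.sum_apply, Finset.sum_apply]
      simp only [Finset.sum_apply, apply_ite (fun g : Fin 4 → ℂ => g j'), Pi.smul_apply,
        Pi.single_apply, smul_ite, smul_zero, smul_eq_mul, mul_ite, mul_one, mul_zero,
        Pi.zero_apply]
      simp [Finset.sum_ite_eq, Finset.sum_ite_eq']
    calc f A = f (∑ i, ∑ j, A i j • (Pi.single i (Pi.single j (1:ℂ)) : P)) := by
            rw [← hA]
      _ ≤ ∑ i, f (∑ j, A i j • (Pi.single i (Pi.single j (1:ℂ)) : P)) :=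
            f_sum f hadd hsmul _ _
      _ ≤ ∑ i, ∑ j, f (A i j • (Pi.single i (Pi.single j (1:ℂ)) : P)) :=
            Finset.sum_le_sum fun i _ => f_sum f hadd hsmul _ _
      _ ≤ ∑ i, ∑ j, ‖A‖ * f (Pi.single i (Pi.single j (1:ℂ)) : P) := by
            refine Finset.sum_le_sum fun i _ => Finset.sum_le_sum fun j _ => ?_
            rw [hsmul]
            have h1 : ‖A i j‖ ≤ ‖A‖ :=
              le_trans (norm_le_pi_norm (A i) j) (norm_le_pi_norm A i)
            exact mul_le_mul_of_nonneg_right h1 (f_nonneg f hadd hsmul _)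
      _ = (∑ i, ∑ j, f (Pi.single i (Pi.single j (1:ℂ)) : P)) * ‖A‖ := by
            rw [Finset.sum_mul]
            exact Finset.sum_congr rfl fun i _ => by
              rw [Finset.sum_mul]; exact Finset.sum_congr rfl fun j _ => mul_comm _ _

lemma f_continuous : Continuous f := by
  obtain ⟨C, hC0, hC⟩ := f_le_const_mul f hadd hsmul
  have : LipschitzWith ⟨C, hC0⟩ f := by
    apply LipschitzWith.of_dist_le_mul
    intro A B
    rw [Real.dist_eq, dist_eq_norm]
    have h1 := f_sub_le f hadd hsmul A B
    have h2 := f_sub_le f hadd hsmul B A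
    have h3 : f (B - A) = f (A - B) := by
      rw [← f_neg f hsmul (A - B), neg_sub]
    have h4 := hC (A - B)
    rw [abs_le]
    show -(C * ‖A - B‖) ≤ f A - f B ∧ f A - f B ≤ C * ‖A - B‖
    constructor <;> [skip; skip] <;> rw [h3] at h2 <;> push_cast <;> linarith
  exact this.continuous

lemma f_lower (hdef : ∀ A, f A = 0 → A = 0) : ∃ c : ℝ, 0 < c ∧ ∀ A, c * ‖A‖ ≤ f A := by
  have hne : (Metric.sphere (0:P) 1).Nonempty := NormedSpace.sphere_nonempty.mpr zero_le_one
  obtain ⟨x0, hx0, hmin⟩ := (isCompact_sphere (0:P) 1).exists_isMinOn hne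
    ((f_continuous f hadd hsmul).continuousOn)
  have hx0n : ‖x0‖ = 1 := by simpa using hx0
  have hx0ne : x0 ≠ 0 := by
    intro h; rw [h, norm_zero] at hx0n; exact zero_ne_one hx0n
  have hc0 : 0 < f x0 := by
    rcases lt_or_eq_of_le (f_nonneg f hadd hsmul x0) with h | h
    · exact h
    · exact absurd (hdef x0 h.symm) hx0ne
  refine ⟨f x0, hc0, fun A => ?_⟩
  rcases eq_or_ne A 0 with rfl | hA
  · simp [f_zero f hsmul]
  · have hnA : 0 < ‖A‖ := norm_pos_iff.mpr hA
    have hmem : ‖A‖⁻¹ • A ∈ Metric.sphere (0:P) 1 := by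
      simp [norm_smul, abs_of_pos (inv_pos.mpr hnA), inv_mul_cancel₀ hnA.ne']
    have h1 : f x0 ≤ f (‖A‖⁻¹ • A) := hmin hmem
    have h2 : f (‖A‖⁻¹ • A) = ‖A‖⁻¹ * f A := by
      rw [f_real_smul f hsmul, abs_of_pos (inv_pos.mpr hnA)]
    rw [h2] at h1
    calc f x0 * ‖A‖ ≤ (‖A‖⁻¹ * f A) * ‖A‖ := by
          exact mul_le_mul_of_nonneg_right h1 hnA.le
      _ = f A := by field_simp
end

section Balls

variable (f : P → ℝ)
  (hadd : ∀ A B, f (A + B) ≤ f A + f B)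
  (hsmul : ∀ (z : ℂ) (A), f (z • A) = ‖z‖ * f A)

def Bf (r : ℝ) : Set P := {y | f y < r}

include hadd hsmul in
lemma Bf_open (r : ℝ) : IsOpen (Bf f r) :=
  IsOpen.preimage (f_continuous f hadd hsmul) isOpen_Iio

include hsmul in
lemma Bf_smul (r : ℝ) (hr : 0 < r) : r • Bf f 1 = Bf f r := by
  ext y
  rw [Set.mem_smul_set_iff_inv_smul_mem₀ hr.ne']
  show f (r⁻¹ • y) < 1 ↔ f y < r
  rw [f_real_smul f hsmul, abs_of_pos (inv_pos.mpr hr), inv_mul_lt_iff₀ hr, mul_one]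

include hsmul in
lemma Bf_measure (r : ℝ) (hr : 0 < r) :
    haarP (Bf f r) = ENNReal.ofReal (r ^ 32) * haarP (Bf f 1) := by
  rw [← Bf_smul f hsmul r hr, haarP, Measure.addHaar_smul_of_nonneg _ hr.le]
  simp only [finrankP]

include hadd hsmul in
lemma Bf_pos (r : ℝ) (hr : 0 < r) : 0 < haarP (Bf f r) :=
  (Bf_open f hadd hsmul r).measure_pos _ ⟨0, by simp [Bf, f_zero f hsmul, hr]⟩

include hadd hsmul in
lemma Bf_lt_top (hdef : ∀ A, f A = 0 → A = 0) (r : ℝ) : haarP (Bf f r) < ⊤ := by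
  obtain ⟨c, hc, hcl⟩ := f_lower f hadd hsmul hdef
  have hsub : Bf f r ⊆ Metric.ball 0 (r / c + 1) := by
    intro y hy
    have h1 := hcl y
    have h2 : f y < r := hy
    simp only [Metric.mem_ball, dist_zero_right]
    have : ‖y‖ ≤ r / c := by
      rw [le_div_iff₀ hc, mul_comm]; linarith
    linarith
  exact (Metric.isBounded_ball.subset hsub).measure_lt_top

include hadd hsmul in
lemma packing (hdef : ∀ A, f A = 0 → A = 0) (R ε : ℝ) (hε0 : 0 < ε) (hεR : ε ≤ R)
    (S : Finset P) (hbound : ∀ x ∈ S, f x ≤ R)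
    (hsep : ∀ x ∈ S, ∀ y ∈ S, x ≠ y → ε < f (x - y)) :
    (S.card : ℝ) ≤ ((R + ε / 2) / (ε / 2)) ^ 32 := by
  classical
  have hε2 : (0:ℝ) < ε / 2 := by linarith
  have hR2 : (0:ℝ) < R + ε / 2 := by linarith
  set t : P → Set P := fun x => (fun z => -x + z) ⁻¹' Bf f (ε / 2) with ht
  have hmem : ∀ x z, z ∈ t x ↔ f (z - x) < ε / 2 := by
    intro x z
    simp only [ht, Set.mem_preimage, neg_add_eq_sub]
    exact Iff.rfl
  have hopen : ∀ x, IsOpen (t x) := fun x =>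
    (Bf_open f hadd hsmul _).preimage (continuous_const.add continuous_id)
  have hdisj : (↑S : Set P).PairwiseDisjoint t := by
    intro x hx y hy hxy
    rw [Function.onFun, Set.disjoint_left]
    intro z hzx hzy
    rw [hmem] at hzx hzy
    have h1 : f (x - y) ≤ f (x - z) + f (z - y) := by
      have := hadd (x - z) (z - y)
      rwa [sub_add_sub_cancel] at this
    have h2 : f (x - z) = f (z - x) := by rw [← f_neg f hsmul (z - x), neg_sub]
    have h3 := hsep x hx y hy hxy
    linarith
  have hsubset : ∀ x ∈ S, t x ⊆ Bf f (R + ε / 2) := by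
    intro x hx z hz
    rw [hmem] at hz
    have h1 : f z ≤ f (z - x) + f x := by
      have := hadd (z - x) x
      rwa [sub_add_cancel] at this
    have h2 := hbound x hx
    show f z < R + ε / 2
    linarith
  have hmeas : haarP (⋃ x ∈ S, t x) = ∑ x ∈ S, haarP (t x) :=
    measure_biUnion_finset hdisj fun x _ => (hopen x).measurableSet
  have hμt : ∀ x, haarP (t x) = haarP (Bf f (ε / 2)) := fun x =>
    measure_preimage_add _ _ _
  set m1 := haarP (Bf f 1) with hm1
  have hm1pos : 0 < m1 := Bf_pos f hadd hsmul 1 one_pos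
  have hm1top : m1 < ⊤ := Bf_lt_top f hadd hsmul hdef 1
  have key : (S.card : ℝ≥0∞) * ENNReal.ofReal ((ε / 2) ^ 32) * m1
      ≤ ENNReal.ofReal ((R + ε / 2) ^ 32) * m1 := by
    calc (S.card : ℝ≥0∞) * ENNReal.ofReal ((ε / 2) ^ 32) * m1
        = ∑ _x ∈ S, (ENNReal.ofReal ((ε / 2) ^ 32) * m1) := by
          rw [Finset.sum_const, nsmul_eq_mul, mul_assoc]
      _ = ∑ x ∈ S, haarP (t x) := by
          refine Finset.sum_congr rfl fun x _ => ?_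
          rw [hμt x, Bf_measure f hsmul _ hε2]
      _ = haarP (⋃ x ∈ S, t x) := hmeas.symm
      _ ≤ haarP (Bf f (R + ε / 2)) := measure_mono (Set.iUnion₂_subset hsubset)
      _ = ENNReal.ofReal ((R + ε / 2) ^ 32) * m1 := Bf_measure f hsmul _ hR2
  have key2 : (S.card : ℝ≥0∞) * ENNReal.ofReal ((ε / 2) ^ 32)
      ≤ ENNReal.ofReal ((R + ε / 2) ^ 32) :=
    (ENNReal.mul_le_mul_iff_left hm1pos.ne' hm1top.ne).mp key
  have key3 : ENNReal.ofReal ((S.card : ℝ) * (ε / 2) ^ 32)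
      ≤ ENNReal.ofReal ((R + ε / 2) ^ 32) := by
    rwa [ENNReal.ofReal_mul (by positivity), ENNReal.ofReal_natCast]
  have key4 : (S.card : ℝ) * (ε / 2) ^ 32 ≤ (R + ε / 2) ^ 32 :=
    (ENNReal.ofReal_le_ofReal_iff (by positivity)).mp key3
  rw [div_pow, le_div_iff₀ (by positivity)]
  exact key4

include hadd hsmul in
lemma covering (hdef : ∀ A, f A = 0 → A = 0) (R ε : ℝ) (hε0 : 0 < ε) (hεR : ε ≤ R)
    (K : Set P) (hK : ∀ x ∈ K, f x ≤ R) :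
    ∃ 𝒩 : Finset P, (↑𝒩 : Set P) ⊆ K ∧
      (𝒩.card : ℝ) ≤ ((R + ε / 2) / (ε / 2)) ^ 32 ∧
      ∀ x ∈ K, ∃ y ∈ 𝒩, f (x - y) ≤ ε := by
  classical
  set Sep : Finset P → Prop := fun S => (↑S : Set P) ⊆ K ∧
    ∀ x ∈ S, ∀ y ∈ S, x ≠ y → ε < f (x - y) with hSepDef
  have hcard : ∀ S, Sep S → (S.card : ℝ) ≤ ((R + ε / 2) / (ε / 2)) ^ 32 := fun S hS =>
    packing f hadd hsmul hdef R ε hε0 hεR S (fun x hx => hK x (hS.1 hx)) hS.2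
  set N : ℕ := ⌈((R + ε / 2) / (ε / 2)) ^ 32⌉₊ with hN
  have hcardN : ∀ S, Sep S → S.card ≤ N := by
    intro S hS
    have h1 : (S.card : ℝ) ≤ (N : ℝ) := le_trans (hcard S hS) (Nat.le_ceil _)
    exact_mod_cast h1
  set A : Set ℕ := {n | ∃ S, Sep S ∧ S.card = n} with hA
  have hA0 : 0 ∈ A := ⟨∅, ⟨by simp, by simp⟩, rfl⟩
  have hAbdd : BddAbove A := ⟨N, fun n ⟨S, hS, hn⟩ => hn ▸ hcardN S hS⟩
  obtain ⟨S, hS, hScard⟩ := Nat.sSup_mem ⟨0, hA0⟩ hAbdd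
  refine ⟨S, hS.1, hcard S hS, ?_⟩
  intro x hx
  by_contra hcon
  push_neg at hcon
  have hxS : x ∉ S := by
    intro hxS
    have h1 := hcon x hxS
    rw [sub_self, f_zero f hsmul] at h1
    linarith
  have hSep' : Sep (insert x S) := by
    constructor
    · intro z hz
      rcases Finset.mem_coe.mp hz |> Finset.mem_insert.mp with rfl | hz'
      · exact hx
      · exact hS.1 hz'
    · intro a ha b hb hab
      rcases Finset.mem_insert.mp ha with rfl | ha' <;>
        rcases Finset.mem_insert.mp hb with rfl | hb'
      · exact absurd rfl hab
      · exact hcon b hb'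
      · rw [← f_neg f hsmul (a - b), neg_sub]
        exact hcon a ha'
      · exact hS.2 a ha' b hb' hab
  have hmem : (insert x S).card ∈ A := ⟨_, hSep', rfl⟩
  have hle := le_csSup hAbdd hmem
  rw [Finset.card_insert_of_notMem hxS, hScard] at hle
  omega

end Balls

end CoveringAux

open CoveringAux in
/-- Covering number bound for 2-qubit unitaries with respect to any unitarily invariant norm
`nrm` on complex 4×4 matrices: for `0 < ε ≤ nrm 1` there is an `ε`-covering net
`𝒩 ⊆ U(4)` with `|𝒩| ≤ (6 · nrm 1 / ε)^{32}`. -/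
theorem covering_two_qubit_unitaries
    (nrm : Matrix (Fin 4) (Fin 4) ℂ → ℝ)
    (hadd : ∀ A B, nrm (A + B) ≤ nrm A + nrm B)
    (hsmul : ∀ (z : ℂ) A, nrm (z • A) = ‖z‖ * nrm A)
    (hdef : ∀ A, nrm A = 0 → A = 0)
    (hinv : ∀ (A U V : Matrix (Fin 4) (Fin 4) ℂ),
      U ∈ Matrix.unitaryGroup (Fin 4) ℂ → V ∈ Matrix.unitaryGroup (Fin 4) ℂ →
      nrm (U * A * V) = nrm A)
    (ε : ℝ) (hε0 : 0 < ε) (hε1 : ε ≤ nrm 1) :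
    ∃ 𝒩 : Finset (Matrix (Fin 4) (Fin 4) ℂ),
      (∀ W ∈ 𝒩, W ∈ Matrix.unitaryGroup (Fin 4) ℂ) ∧
      (𝒩.card : ℝ) ≤ (6 * nrm 1 / ε) ^ (32 : ℕ) ∧
      ∀ U ∈ Matrix.unitaryGroup (Fin 4) ℂ, ∃ W ∈ 𝒩, nrm (U - W) ≤ ε := by
  classical
  set R : ℝ := nrm 1 with hR
  have hRpos : 0 < R := lt_of_lt_of_le hε0 hε1
  set f : P → ℝ := fun x => nrm (Matrix.of x) with hf
  have hadd' : ∀ A B : P, f (A + B) ≤ f A + f B := fun A B =>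
    hadd (Matrix.of A) (Matrix.of B)
  have hsmul' : ∀ (z : ℂ) (A : P), f (z • A) = ‖z‖ * f A := fun z A =>
    hsmul z (Matrix.of A)
  have hdef' : ∀ A : P, f A = 0 → A = 0 := fun A h => hdef (Matrix.of A) h
  set K : Set P := {x | Matrix.of x ∈ Matrix.unitaryGroup (Fin 4) ℂ} with hK
  have hKbound : ∀ x ∈ K, f x ≤ R := by
    intro x hx
    have h1 := hinv 1 (Matrix.of x) 1 hx (one_mem _)
    rw [mul_one, mul_one] at h1
    exact le_of_eq h1
  obtain ⟨𝒩', hsub, hcard, hcov⟩ :=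
    covering f hadd' hsmul' hdef' R ε hε0 hε1 K hKbound
  refine ⟨𝒩'.image Matrix.of, ?_, ?_, ?_⟩
  · intro W hW
    obtain ⟨x, hx, rfl⟩ := Finset.mem_image.mp hW
    exact hsub hx
  · have h1 : ((𝒩'.image Matrix.of).card : ℝ) ≤ (𝒩'.card : ℝ) := by
      exact_mod_cast Finset.card_image_le
    refine le_trans h1 (le_trans hcard ?_)
    have hbase : (R + ε / 2) / (ε / 2) ≤ 6 * R / ε := by
      rw [div_le_div_iff₀ (by positivity) hε0]
      nlinarith [sq_nonneg ε, mul_le_mul_of_nonneg_right hε1 hε0.le]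
    exact pow_le_pow_left₀ (by positivity) hbase 32
  · intro U hU
    obtain ⟨y, hy, hfy⟩ := hcov ((Matrix.of).symm U) hU
    exact ⟨Matrix.of y, Finset.mem_image_of_mem _ hy, hfy⟩
end

section
/- Covering number bound for d-dimensional unitaries: let d be a positive integer and let ‖·‖ be a norm on the space of complex d×d matrices that is unitarily invariant, i.e., ‖U A V‖ = ‖A‖ for all matrices A and all unitaries U, V ∈ U(d). Then for every ε with 0 < ε ≤ ‖I‖ (where I is the d×d identity matrix), there exists a finite subset 𝒩 ⊆ U(d) with cardinality |𝒩| ≤ (6‖I‖/ε)^{2d²} such that for every U ∈ U(d) there exists V ∈ 𝒩 with ‖U − V‖ ≤ ε. -/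
open Matrix Metric Set MeasureTheory Module ENNReal

noncomputable section

section general

variable {E : Type*} [NormedAddCommGroup E] [NormedSpace ℝ E] [FiniteDimensional ℝ E]
  [MeasurableSpace E] [BorelSpace E]

lemma my_card_le_of_separated {R ε : ℝ} (hε0 : 0 < ε) (hεR : ε ≤ R)
    (S : Finset E) (hS : ∀ x ∈ S, ‖x‖ ≤ R)
    (hsep : ∀ x ∈ S, ∀ y ∈ S, x ≠ y → ε ≤ dist x y) :
    (S.card : ℝ) ≤ (6 * R / ε) ^ (finrank ℝ E) := by
  classical
  set n := finrank ℝ E with hn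
  set μ : Measure E := (finBasis ℝ E).addHaar with hμ
  have hR0 : 0 < R := lt_of_lt_of_le hε0 hεR
  have hhalf : (0:ℝ) < ε / 2 := by linarith
  -- disjointness
  have hd : (↑S : Set E).PairwiseDisjoint (fun x => ball x (ε/2)) := by
    intro x hx y hy hxy
    exact ball_disjoint_ball (by
      have := hsep x (by simpa using hx) y (by simpa using hy) hxy
      linarith)
  have hm : ∀ b ∈ S, MeasurableSet (ball b (ε/2)) := fun b _ => measurableSet_ball
  have hsub : (⋃ x ∈ S, ball x (ε/2)) ⊆ closedBall 0 (R + ε/2) := by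
    intro z hz
    simp only [mem_iUnion, exists_prop] at hz
    obtain ⟨x, hx, hzx⟩ := hz
    have h1 : dist z x < ε/2 := mem_ball.1 hzx
    have h2 : dist x (0:E) ≤ R := by simpa [dist_eq_norm] using hS x hx
    have := dist_triangle z x (0:E)
    exact mem_closedBall.2 (by linarith)
  have key : μ (⋃ x ∈ S, ball x (ε/2)) = ∑ x ∈ S, μ (ball x (ε/2)) :=
    measure_biUnion_finset hd hm
  have hball : ∀ x : E, μ (ball x (ε/2)) = ENNReal.ofReal ((ε/2) ^ n) * μ (ball 0 1) :=
    fun x => Measure.addHaar_ball_of_pos μ x hhalf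
  have hcb : μ (closedBall (0:E) (R + ε/2)) =
      ENNReal.ofReal ((R + ε/2) ^ n) * μ (ball 0 1) :=
    Measure.addHaar_closedBall μ (0:E) (by linarith)
  have hle : (S.card : ℝ≥0∞) * (ENNReal.ofReal ((ε/2) ^ n) * μ (ball 0 1)) ≤
      ENNReal.ofReal ((R + ε/2) ^ n) * μ (ball 0 1) := by
    calc (S.card : ℝ≥0∞) * (ENNReal.ofReal ((ε/2) ^ n) * μ (ball 0 1))
        = ∑ x ∈ S, μ (ball x (ε/2)) := by
          rw [Finset.sum_congr rfl (fun x _ => hball x), Finset.sum_const, nsmul_eq_mul]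
      _ = μ (⋃ x ∈ S, ball x (ε/2)) := key.symm
      _ ≤ μ (closedBall (0:E) (R + ε/2)) := measure_mono hsub
      _ = _ := hcb
  have hBpos : μ (ball (0:E) 1) ≠ 0 := (measure_ball_pos μ (0:E) one_pos).ne'
  have hBtop : μ (ball (0:E) 1) ≠ ⊤ := measure_ball_lt_top.ne
  rw [← mul_assoc] at hle
  have hle2 : (S.card : ℝ≥0∞) * ENNReal.ofReal ((ε/2) ^ n) ≤
      ENNReal.ofReal ((R + ε/2) ^ n) :=
    (ENNReal.mul_le_mul_iff_left hBpos hBtop).1 hle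
  have hpn : (0:ℝ) < (ε/2) ^ n := pow_pos hhalf n
  have hreal : (S.card : ℝ) * (ε/2) ^ n ≤ (R + ε/2) ^ n := by
    have := hle2
    rw [← ENNReal.ofReal_natCast, ← ENNReal.ofReal_mul (by positivity)] at this
    exact (ENNReal.ofReal_le_ofReal_iff (by positivity)).1 this
  have h3 : (S.card : ℝ) ≤ ((R + ε/2) / (ε/2)) ^ n := by
    rw [div_pow]
    rw [le_div_iff₀ hpn]
    exact hreal
  refine h3.trans ?_
  apply pow_le_pow_left₀ (by positivity)
  rw [div_le_div_iff₀ hhalf hε0]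
  nlinarith

lemma my_exists_net (K : Set E) (R ε : ℝ) (hK : ∀ x ∈ K, ‖x‖ ≤ R)
    (hε0 : 0 < ε) (hεR : ε ≤ R) :
    ∃ S : Finset E, (∀ x ∈ S, x ∈ K) ∧ (S.card : ℝ) ≤ (6 * R / ε) ^ (finrank ℝ E) ∧
      ∀ x ∈ K, ∃ y ∈ S, dist x y ≤ ε := by
  classical
  set P : Finset E → Prop := fun S =>
    (∀ x ∈ S, x ∈ K) ∧ ∀ x ∈ S, ∀ y ∈ S, x ≠ y → ε ≤ dist x y with hP
  have hcard : ∀ S : Finset E, P S → (S.card : ℝ) ≤ (6 * R / ε) ^ (finrank ℝ E) :=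
    fun S hS => my_card_le_of_separated hε0 hεR S (fun x hx => hK x (hS.1 x hx)) hS.2
  set A : Set ℕ := {k | ∃ S : Finset E, P S ∧ S.card = k} with hA
  have hA0 : 0 ∈ A := ⟨∅, ⟨by simp, by simp⟩, rfl⟩
  have hbdd : BddAbove A := by
    refine ⟨⌊(6 * R / ε) ^ (finrank ℝ E)⌋₊, fun k hk => ?_⟩
    obtain ⟨S, hS, rfl⟩ := hk
    exact Nat.le_floor (hcard S hS)
  have hN : sSup A ∈ A := Nat.sSup_mem ⟨0, hA0⟩ hbdd
  obtain ⟨S, hS, hScard⟩ := hN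
  refine ⟨S, hS.1, hcard S hS, ?_⟩
  intro x hx
  by_contra hcon
  push_neg at hcon
  have hxnotin : x ∉ S := fun hmem => by
    have := hcon x hmem; simp at this; linarith
  have hP' : P (insert x S) := by
    constructor
    · intro y hy
      rcases Finset.mem_insert.1 hy with rfl | hy
      · exact hx
      · exact hS.1 y hy
    · intro a ha b hb hab
      rcases Finset.mem_insert.1 ha with ha' | ha'
      · rcases Finset.mem_insert.1 hb with hb' | hb'
        · exact absurd (ha'.trans hb'.symm) hab
        · rw [ha']; exact (hcon b hb').le
      · rcases Finset.mem_insert.1 hb with hb' | hb'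
        · rw [hb', dist_comm]; exact (hcon a ha').le
        · exact hS.2 a ha' b hb' hab
  have : (insert x S).card ≤ sSup A := le_csSup hbdd ⟨insert x S, hP', rfl⟩
  rw [Finset.card_insert_of_notMem hxnotin, hScard] at this
  omega

end general

/-- Type synonym for `d × d` complex matrices, used to carry a custom norm structure. -/
def CovMat (d : ℕ) : Type := Matrix (Fin d) (Fin d) ℂ


/-- Covering number bound for `d`-dimensional unitaries with respect to any unitarily invariant
norm `nrm` on complex d×d matrices: for `0 < ε ≤ nrm 1` there is an `ε`-covering net
`𝒩 ⊆ U(d)` with `|𝒩| ≤ (6 · nrm 1 / ε)^{2d²}`. -/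
theorem covering_d_dimensional_unitaries (d : ℕ) (hd : 0 < d)
    (nrm : Matrix (Fin d) (Fin d) ℂ → ℝ)
    (hadd : ∀ A B, nrm (A + B) ≤ nrm A + nrm B)
    (hsmul : ∀ (z : ℂ) A, nrm (z • A) = ‖z‖ * nrm A)
    (hdef : ∀ A, nrm A = 0 → A = 0)
    (hinv : ∀ (A U V : Matrix (Fin d) (Fin d) ℂ),
      U ∈ Matrix.unitaryGroup (Fin d) ℂ → V ∈ Matrix.unitaryGroup (Fin d) ℂ →
      nrm (U * A * V) = nrm A)
    (ε : ℝ) (hε0 : 0 < ε) (hε1 : ε ≤ nrm 1) :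
    ∃ 𝒩 : Finset (Matrix (Fin d) (Fin d) ℂ),
      (∀ W ∈ 𝒩, W ∈ Matrix.unitaryGroup (Fin d) ℂ) ∧
      (𝒩.card : ℝ) ≤ (6 * nrm 1 / ε) ^ (2 * d ^ 2) ∧
      ∀ U ∈ Matrix.unitaryGroup (Fin d) ℂ, ∃ W ∈ 𝒩, nrm (U - W) ≤ ε := by
  classical
  -- facts with the original matrix instances
  have hRsmul : ∀ (r : ℝ) (A : Matrix (Fin d) (Fin d) ℂ), nrm (r • A) = ‖r‖ * nrm A := by
    intro r A
    have h1 : (algebraMap ℝ ℂ r) • A = r • A := algebraMap_smul ℂ r A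
    rw [← h1, Complex.coe_algebraMap, hsmul, Complex.norm_real]
  have hfrank : finrank ℝ (Matrix (Fin d) (Fin d) ℂ) = 2 * d ^ 2 := by
    rw [Module.finrank_matrix, Complex.finrank_real_complex, Fintype.card_fin]
    ring
  have h0 : nrm 0 = 0 := by
    have := hsmul 0 0
    simpa using this
  have hneg : ∀ A : Matrix (Fin d) (Fin d) ℂ, nrm (-A) = nrm A := by
    intro A
    have := hsmul (-1) A
    simpa using this
  -- set up the synonym with the custom norm
  letI : AddCommGroup (CovMat d) :=
    inferInstanceAs (AddCommGroup (Matrix (Fin d) (Fin d) ℂ))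
  letI hmod : Module ℝ (CovMat d) :=
    inferInstanceAs (Module ℝ (Matrix (Fin d) (Fin d) ℂ))
  letI : NormedAddCommGroup (CovMat d) := AddGroupNorm.toNormedAddCommGroup
    { toFun := fun A => nrm A
      map_zero' := h0
      add_le' := fun A B => hadd A B
      neg' := fun A => hneg A
      eq_zero_of_map_eq_zero' := fun A h => hdef A h }
  have hnorm : ∀ A : CovMat d, ‖A‖ = nrm A := fun A => rfl
  letI : NormedSpace ℝ (CovMat d) :=
    { hmod with
      norm_smul_le := fun r A => by
        rw [hnorm, hnorm]
        exact le_of_eq (hRsmul r A) }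
  letI : MeasurableSpace (CovMat d) := borel (CovMat d)
  letI : BorelSpace (CovMat d) := ⟨rfl⟩
  letI : FiniteDimensional ℝ (CovMat d) :=
    inferInstanceAs (FiniteDimensional ℝ (Matrix (Fin d) (Fin d) ℂ))
  have hfrank' : finrank ℝ (CovMat d) = 2 * d ^ 2 := hfrank
  have hKnorm : ∀ x ∈ (show Set (CovMat d) from
      (Matrix.unitaryGroup (Fin d) ℂ : Set (Matrix (Fin d) (Fin d) ℂ))), ‖x‖ ≤ nrm 1 := by
    intro x hx
    have hx' : (show Matrix (Fin d) (Fin d) ℂ from x) ∈ Matrix.unitaryGroup (Fin d) ℂ := hx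
    have h2 : nrm ((show Matrix (Fin d) (Fin d) ℂ from x) * 1 * 1) = nrm 1 :=
      hinv 1 _ 1 hx' (one_mem _)
    rw [mul_one, mul_one] at h2
    rw [hnorm]
    exact h2.le
  obtain ⟨S, hSmem, hScard, hScover⟩ :=
    my_exists_net (E := CovMat d)
      (show Set (CovMat d) from
        (Matrix.unitaryGroup (Fin d) ℂ : Set (Matrix (Fin d) (Fin d) ℂ)))
      (nrm 1) ε hKnorm hε0 hε1
  refine ⟨S, fun W hW => hSmem W hW, ?_, ?_⟩
  · rw [hfrank'] at hScard
    exact hScard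
  · intro U hU
    obtain ⟨W, hWS, hWd⟩ := hScover U hU
    exact ⟨W, hWS, by
      have h := dist_eq_norm (show CovMat d from U) W
      rw [hnorm] at h
      exact h.symm.le.trans hWd⟩
end
end

section
/- Symmetrization inequality: let Z be a measurable space with probability measure μ, let Θ be a countable nonempty index set, let C > 0, and let f_θ : Z → ℝ (θ ∈ Θ) be measurable functions with |f_θ(z)| ≤ C for all θ and z. Then for every positive integer N: 𝔼_{S ~ μ^{⊗N}} [ sup_{θ∈Θ} ( ∫ f_θ dμ − (1/N) Σ_{i=1}^N f_θ(z_i) ) ] ≤ 2 𝔼_{S ~ μ^{⊗N}} [ 2^{−N} Σ_{σ ∈ {−1,1}^N} sup_{θ∈Θ} (1/N) Σ_{i=1}^N σ_i f_θ(z_i) ], where S = (z_1,…,z_N). -/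
open MeasureTheory

private def rsgn (b : Bool) : ℝ := if b then 1 else -1

private lemma abs_rsgn_mul (b : Bool) (x : ℝ) : |rsgn b * x| = |x| := by
  cases b <;> simp [rsgn]

private lemma sym_bddAbove {Θ : Type*} {g : Θ → ℝ} {M : ℝ} (h : ∀ θ, g θ ≤ M) :
    BddAbove (Set.range g) := ⟨M, by rintro _ ⟨θ, rfl⟩; exact h θ⟩

private lemma sym_abs_ciSup_le {Θ : Type*} [Nonempty Θ] {g : Θ → ℝ} {M : ℝ}
    (h : ∀ θ, |g θ| ≤ M) : |⨆ θ, g θ| ≤ M := by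
  rw [abs_le]
  constructor
  · obtain ⟨θ₀⟩ := ‹Nonempty Θ›
    exact le_trans (abs_le.1 (h θ₀)).1
      (le_ciSup (sym_bddAbove fun θ => (abs_le.1 (h θ)).2) θ₀)
  · exact ciSup_le fun θ => (abs_le.1 (h θ)).2

private lemma sym_integrable {α : Type*} [MeasurableSpace α] (P : Measure α) [IsFiniteMeasure P]
    {g : α → ℝ} (hg : Measurable g) {M : ℝ} (h : ∀ x, |g x| ≤ M) : Integrable g P :=
  (integrable_const M).mono' hg.aestronglyMeasurable (ae_of_all _ h)

private lemma sym_avg_abs_le {N : ℕ} (hN : 0 < N) {c : Fin N → ℝ} {C : ℝ}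
    (h : ∀ i, |c i| ≤ C) : |(1 / (N : ℝ)) * ∑ i, c i| ≤ C := by
  have hNpos : (0:ℝ) < N := by exact_mod_cast hN
  have h1 : |∑ i, c i| ≤ (N:ℝ) * C := by
    calc |∑ i, c i| ≤ ∑ i, |c i| := Finset.abs_sum_le_sum_abs _ _
      _ ≤ ∑ _i : Fin N, C := Finset.sum_le_sum fun i _ => h i
      _ = (N:ℝ) * C := by simp [mul_comm]
  rw [abs_mul, abs_of_pos (by positivity : (0:ℝ) < 1 / (N:ℝ))]
  calc 1 / (N:ℝ) * |∑ i, c i| ≤ 1 / (N:ℝ) * ((N:ℝ) * C) :=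
        mul_le_mul_of_nonneg_left h1 (by positivity)
    _ = C := by field_simp

private lemma sym_map_eval {Z : Type*} [MeasurableSpace Z] (μ : Measure Z)
    [IsProbabilityMeasure μ] (N : ℕ) (i : Fin N) :
    Measure.map (fun S : Fin N → Z => S i) (Measure.pi fun _ : Fin N => μ) = μ := by
  classical
  ext s hs
  rw [Measure.map_apply (measurable_pi_apply i) hs]
  have hpre : (fun S : Fin N → Z => S i) ⁻¹' s
      = Set.univ.pi (Function.update (fun _ : Fin N => (Set.univ : Set Z)) i s) :=
    Set.eval_preimage
  rw [hpre, Measure.pi_pi]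
  rw [Finset.prod_eq_single i (fun j _ hj => by simp [Function.update_of_ne hj]) (by simp)]
  simp

/-- Symmetrization inequality: the expected uniform deviation of empirical means from true means,
over an i.i.d. sample of size `N`, is at most twice the expected empirical Rademacher average.
The Rademacher average is written as the exact average over all `2^N` sign patterns
(`σ i = true` encodes the sign `+1`). -/
theorem symmetrization_inequality {Z : Type*} [MeasurableSpace Z]
    (μ : Measure Z) [IsProbabilityMeasure μ]
    {Θ : Type*} [Countable Θ] [Nonempty Θ] (C : ℝ) (hC : 0 < C) (f : Θ → Z → ℝ)
    (hmeas : ∀ θ, Measurable (f θ)) (hbd : ∀ θ z, |f θ z| ≤ C)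
    (N : ℕ) (hN : 0 < N) :
    (∫ S, (⨆ θ, ((∫ z, f θ z ∂μ) - (1 / N) * ∑ i, f θ (S i)))
        ∂(Measure.pi fun _ : Fin N => μ))
      ≤ 2 * ∫ S, ((2 ^ N : ℝ)⁻¹ * ∑ σ : Fin N → Bool,
            ⨆ θ, (1 / N) * ∑ i, (if σ i then (1 : ℝ) else -1) * f θ (S i))
          ∂(Measure.pi fun _ : Fin N => μ) := by
  classical
  set ν : Measure (Fin N → Z) := Measure.pi fun _ : Fin N => μ with hν
  set P : Measure ((Fin N → Z) × (Fin N → Z)) := ν.prod ν with hP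
  set π2 : Measure (Fin N → Z × Z) := Measure.pi fun _ : Fin N => μ.prod μ with hπ2
  have hNpos : (0:ℝ) < N := by exact_mod_cast hN
  have hRbd : ∀ θ, |∫ z, f θ z ∂μ| ≤ C := by
    intro θ
    have := norm_integral_le_of_norm_le_const
      (μ := μ) (f := f θ) (C := C) (ae_of_all μ fun z => by
        simpa [Real.norm_eq_abs] using hbd θ z)
    simpa [Real.norm_eq_abs, measure_univ] using this
  set G1 : (Fin N → Z) → ℝ :=
    fun S => ⨆ θ, ((∫ z, f θ z ∂μ) - (1 / (N:ℝ)) * ∑ i, f θ (S i)) with hG1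
  set G2 : (Fin N → Z) × (Fin N → Z) → ℝ :=
    fun p => ⨆ θ, (1 / (N:ℝ)) * ∑ i, (f θ (p.2 i) - f θ (p.1 i)) with hG2
  set G3 : (Fin N → Bool) → (Fin N → Z) × (Fin N → Z) → ℝ :=
    fun σ p => ⨆ θ, (1 / (N:ℝ)) * ∑ i, rsgn (σ i) * (f θ (p.2 i) - f θ (p.1 i)) with hG3
  set G4 : (Fin N → Bool) → (Fin N → Z) → ℝ :=
    fun σ S => ⨆ θ, (1 / (N:ℝ)) * ∑ i, rsgn (σ i) * f θ (S i) with hG4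
  -- measurability
  have hmeasG1 : Measurable G1 :=
    Measurable.iSup fun θ => measurable_const.sub
      ((Finset.measurable_sum _ fun i _ => (hmeas θ).comp (measurable_pi_apply i)).const_mul _)
  have hmeasG2 : Measurable G2 :=
    Measurable.iSup fun θ => ((Finset.measurable_sum _ fun i _ =>
      (((hmeas θ).comp ((measurable_pi_apply i).comp measurable_snd)).sub
        ((hmeas θ).comp ((measurable_pi_apply i).comp measurable_fst)))).const_mul _)
  have hmeasG3 : ∀ σ, Measurable (G3 σ) := fun σ =>
    Measurable.iSup fun θ => ((Finset.measurable_sum _ fun i _ =>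
      ((((hmeas θ).comp ((measurable_pi_apply i).comp measurable_snd)).sub
        ((hmeas θ).comp ((measurable_pi_apply i).comp measurable_fst))).const_mul _)).const_mul _)
  have hmeasG4 : ∀ σ, Measurable (G4 σ) := fun σ =>
    Measurable.iSup fun θ => ((Finset.measurable_sum _ fun i _ =>
      (((hmeas θ).comp (measurable_pi_apply i)).const_mul _)).const_mul _)
  -- bounds
  have hG1bd : ∀ S, |G1 S| ≤ 2 * C := fun S => sym_abs_ciSup_le fun θ => by
    have h2 := sym_avg_abs_le hN (c := fun i => f θ (S i)) (fun i => hbd θ (S i))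
    calc |(∫ z, f θ z ∂μ) - (1 / (N:ℝ)) * ∑ i, f θ (S i)|
        ≤ |∫ z, f θ z ∂μ| + |(1 / (N:ℝ)) * ∑ i, f θ (S i)| := abs_sub _ _
      _ ≤ C + C := add_le_add (hRbd θ) h2
      _ = 2 * C := by ring
  have hdiffbd : ∀ θ (a b : Z), |f θ a - f θ b| ≤ 2 * C := fun θ a b => by
    calc |f θ a - f θ b| ≤ |f θ a| + |f θ b| := abs_sub _ _
      _ ≤ C + C := add_le_add (hbd θ _) (hbd θ _)
      _ = 2 * C := by ring
  have hG2bd : ∀ p, |G2 p| ≤ 2 * C := fun p => sym_abs_ciSup_le fun θ =>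
    sym_avg_abs_le hN fun i => hdiffbd θ _ _
  have hG3bd : ∀ σ p, |G3 σ p| ≤ 2 * C := fun σ p => sym_abs_ciSup_le fun θ =>
    sym_avg_abs_le hN fun i => by rw [abs_rsgn_mul]; exact hdiffbd θ _ _
  have hG4bd : ∀ σ S, |G4 σ S| ≤ C := fun σ S => sym_abs_ciSup_le fun θ =>
    sym_avg_abs_le hN fun i => by rw [abs_rsgn_mul]; exact hbd θ _
  -- integrability
  have hintG1 : Integrable G1 ν := sym_integrable ν hmeasG1 hG1bd
  have hintG2 : Integrable G2 P := sym_integrable P hmeasG2 hG2bd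
  have hintG3 : ∀ σ, Integrable (G3 σ) P := fun σ => sym_integrable P (hmeasG3 σ) (hG3bd σ)
  have hintG4 : ∀ σ, Integrable (G4 σ) ν := fun σ => sym_integrable ν (hmeasG4 σ) (hG4bd σ)
  -- Step A1: the mean of the empirical risk is the true risk
  have hA1 : ∀ θ, ∫ S' : Fin N → Z, (1 / (N:ℝ)) * ∑ i, f θ (S' i) ∂ν = ∫ z, f θ z ∂μ := by
    intro θ
    rw [integral_const_mul]
    rw [integral_finset_sum Finset.univ (f := fun (i : Fin N) (S : Fin N → Z) => f θ (S i))
      (fun i _ => sym_integrable ν ((hmeas θ).comp (measurable_pi_apply i))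
        (fun S => hbd θ (S i)))]
    have hcoord : ∀ i : Fin N, (∫ S : Fin N → Z, f θ (S i) ∂ν) = ∫ z, f θ z ∂μ := by
      intro i
      conv_rhs => rw [← sym_map_eval μ N i,
        integral_map (measurable_pi_apply i).aemeasurable (hmeas θ).aestronglyMeasurable]
    rw [Finset.sum_congr rfl fun i _ => hcoord i, Finset.sum_const, Finset.card_univ,
      Fintype.card_fin, nsmul_eq_mul]
    field_simp
  -- Step A2: pointwise bound by the averaged two-sample deviation
  have hA2 : ∀ S, G1 S ≤ ∫ S', G2 (S, S') ∂ν := by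
    intro S
    refine ciSup_le fun θ => ?_
    have e1 : (∫ z, f θ z ∂μ) - (1 / (N:ℝ)) * ∑ i, f θ (S i)
        = ∫ S', (1 / (N:ℝ)) * ∑ i, (f θ (S' i) - f θ (S i)) ∂ν := by
      have hfun : ∀ S' : Fin N → Z, (1 / (N:ℝ)) * ∑ i, (f θ (S' i) - f θ (S i))
          = (1 / (N:ℝ)) * ∑ i, f θ (S' i) - (1 / (N:ℝ)) * ∑ i, f θ (S i) := by
        intro S'; rw [Finset.sum_sub_distrib, mul_sub]
      simp_rw [hfun]
      rw [integral_sub (sym_integrable ν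
          (g := fun S' : Fin N → Z => (1 / (N:ℝ)) * ∑ i, f θ (S' i))
          (by exact (Finset.measurable_sum _ fun i _ =>
            (hmeas θ).comp (measurable_pi_apply i)).const_mul _)
          (M := C) (fun S' => sym_avg_abs_le hN fun i => hbd θ (S' i)))
        (integrable_const ((1 / (N:ℝ)) * ∑ i, f θ (S i))), hA1 θ, integral_const]
      simp [measure_univ]
    rw [e1]
    refine integral_mono (sym_integrable ν
        (g := fun S' : Fin N → Z => (1 / (N:ℝ)) * ∑ i, (f θ (S' i) - f θ (S i)))
        (by exact (Finset.measurable_sum _ fun i _ =>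
          ((hmeas θ).comp (measurable_pi_apply i)).sub measurable_const).const_mul _)
        (M := 2 * C) (fun S' => sym_avg_abs_le hN fun i => hdiffbd θ _ _))
      (sym_integrable ν (g := fun S' => G2 (S, S'))
        (hmeasG2.comp measurable_prodMk_left) (M := 2 * C)
        (fun S' => hG2bd (S, S'))) ?_
    intro S'
    exact le_ciSup (f := fun θ' : Θ => (1 / (N:ℝ)) * ∑ i, (f θ' (S' i) - f θ' (S i)))
      (sym_bddAbove fun θ' =>
        (abs_le.1 (sym_avg_abs_le hN fun i => hdiffbd θ' _ _)).2) θ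
  -- Step A3: integrate
  have hA3 : ∫ S, G1 S ∂ν ≤ ∫ p, G2 p ∂P := by
    calc ∫ S, G1 S ∂ν ≤ ∫ S, (∫ S', G2 (S, S') ∂ν) ∂ν :=
          integral_mono hintG1 hintG2.integral_prod_left hA2
      _ = ∫ p, G2 p ∂P := by
          have := integral_integral (f := fun S S' => G2 (S, S')) (μ := ν) (ν := ν) hintG2
          simpa using this
  -- Step B: symmetrization via measure-preserving coordinate swaps
  have hpe : MeasurePreserving (⇑(MeasurableEquiv.arrowProdEquivProdArrow Z Z (Fin N))) π2 P :=
    measurePreserving_arrowProdEquivProdArrow Z Z (Fin N) (fun _ => μ) (fun _ => μ)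
  have hB : ∀ σ : Fin N → Bool, ∫ p, G2 p ∂P = ∫ p, G3 σ p ∂P := by
    intro σ
    set e := MeasurableEquiv.arrowProdEquivProdArrow Z Z (Fin N) with he
    set T : (Fin N → Z × Z) → (Fin N → Z × Z) :=
      fun W i => if σ i then W i else (W i).swap with hT
    have hTinv : ∀ W, T (T W) = W := by
      intro W; funext i; by_cases hσ : σ i <;> simp [hT, hσ]
    have hTmp0 : MeasurePreserving T π2 π2 :=
      measurePreserving_pi (fun _ : Fin N => μ.prod μ) (fun _ : Fin N => μ.prod μ)
        (f := fun i (z : Z × Z) => if σ i then z else z.swap)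
        (fun i => by
          by_cases hσ : σ i
          · convert MeasurePreserving.id (μ.prod μ) using 1; funext z; simp [hσ]
          · simpa [hσ] using Measure.measurePreserving_swap (μ := μ) (ν := μ))
    set Teq : (Fin N → Z × Z) ≃ᵐ (Fin N → Z × Z) :=
      { toFun := T, invFun := T, left_inv := hTinv, right_inv := hTinv,
        measurable_toFun := hTmp0.measurable,
        measurable_invFun := hTmp0.measurable } with hTeq
    have hTmp : MeasurePreserving (⇑Teq) π2 π2 := hTmp0
    have h1 : ∫ p, G2 p ∂P = ∫ W, G2 (e W) ∂π2 :=
      (hpe.integral_comp e.measurableEmbedding G2).symm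
    have h2 : ∫ p, G3 σ p ∂P = ∫ W, G3 σ (e W) ∂π2 :=
      (hpe.integral_comp e.measurableEmbedding (G3 σ)).symm
    have h3 : ∫ W, G2 (e (Teq W)) ∂π2 = ∫ W, G2 (e W) ∂π2 :=
      hTmp.integral_comp Teq.measurableEmbedding (fun W => G2 (e W))
    have h4 : ∀ W, G2 (e (Teq W)) = G3 σ (e W) := by
      intro W
      rw [hG2, hG3]
      refine iSup_congr fun θ => ?_
      congr 1
      refine Finset.sum_congr rfl fun i _ => ?_
      show f θ ((T W i).2) - f θ ((T W i).1)
        = rsgn (σ i) * (f θ ((W i).2) - f θ ((W i).1))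
      by_cases hσ : σ i <;> simp [hT, hσ, rsgn] <;> ring
    rw [h1, h2, ← h3]
    exact integral_congr_ae (ae_of_all _ fun W => h4 W)
  have hcard : Fintype.card (Fin N → Bool) = 2 ^ N := by simp [Fintype.card_fun]
  have hB2 : ∫ p, G2 p ∂P = (2 ^ N : ℝ)⁻¹ * ∑ σ : Fin N → Bool, ∫ p, G3 σ p ∂P := by
    rw [Finset.sum_congr rfl fun σ _ => (hB σ).symm, Finset.sum_const, Finset.card_univ,
      hcard, nsmul_eq_mul]
    push_cast
    rw [← mul_assoc, inv_mul_cancel₀ (by positivity : ((2:ℝ) ^ N) ≠ 0), one_mul]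
  -- integrals of G4 against the coordinates of P
  have hsnd : ∀ σ, ∫ p : (Fin N → Z) × (Fin N → Z), G4 σ p.2 ∂P = ∫ S, G4 σ S ∂ν := by
    intro σ
    have hmap : Measure.map Prod.snd P = ν := by
      rw [hP, Measure.map_snd_prod]; simp [measure_univ]
    calc ∫ p : (Fin N → Z) × (Fin N → Z), G4 σ p.2 ∂P
        = ∫ S, G4 σ S ∂(Measure.map Prod.snd P) :=
          (integral_map measurable_snd.aemeasurable (hmeasG4 σ).aestronglyMeasurable).symm
      _ = ∫ S, G4 σ S ∂ν := by rw [hmap]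
  have hfst : ∀ σ, ∫ p : (Fin N → Z) × (Fin N → Z), G4 σ p.1 ∂P = ∫ S, G4 σ S ∂ν := by
    intro σ
    have hmap : Measure.map Prod.fst P = ν := by
      rw [hP, Measure.map_fst_prod]; simp [measure_univ]
    calc ∫ p : (Fin N → Z) × (Fin N → Z), G4 σ p.1 ∂P
        = ∫ S, G4 σ S ∂(Measure.map Prod.fst P) :=
          (integral_map measurable_fst.aemeasurable (hmeasG4 σ).aestronglyMeasurable).symm
      _ = ∫ S, G4 σ S ∂ν := by rw [hmap]
  -- Step D: split the two-sample Rademacher sup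
  have hD : ∀ σ : Fin N → Bool,
      ∫ p, G3 σ p ∂P ≤ (∫ S, G4 σ S ∂ν) + ∫ S, G4 (fun i => !σ i) S ∂ν := by
    intro σ
    have hG4bdd : ∀ (τ : Fin N → Bool) (S : Fin N → Z),
        BddAbove (Set.range fun θ => (1 / (N:ℝ)) * ∑ i, rsgn (τ i) * f θ (S i)) := fun τ S =>
      sym_bddAbove fun θ => (abs_le.1 (sym_avg_abs_le hN fun i => by
        rw [abs_rsgn_mul]; exact hbd θ _)).2
    have hpt : ∀ p : (Fin N → Z) × (Fin N → Z),
        G3 σ p ≤ G4 σ p.2 + G4 (fun i => !σ i) p.1 := by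
      intro p
      refine ciSup_le fun θ => ?_
      have hsplit : (1 / (N:ℝ)) * ∑ i, rsgn (σ i) * (f θ (p.2 i) - f θ (p.1 i))
          = (1 / (N:ℝ)) * ∑ i, rsgn (σ i) * f θ (p.2 i)
            + (1 / (N:ℝ)) * ∑ i, rsgn (!σ i) * f θ (p.1 i) := by
        rw [← mul_add, ← Finset.sum_add_distrib]
        congr 1
        refine Finset.sum_congr rfl fun i _ => ?_
        cases σ i <;> simp [rsgn] <;> ring
      rw [hsplit]
      exact add_le_add (le_ciSup (hG4bdd σ p.2) θ) (le_ciSup (hG4bdd _ p.1) θ)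
    calc ∫ p, G3 σ p ∂P ≤ ∫ p, (G4 σ p.2 + G4 (fun i => !σ i) p.1) ∂P :=
          integral_mono (hintG3 σ)
            ((sym_integrable P ((hmeasG4 σ).comp measurable_snd) (fun p => hG4bd σ p.2)).add
              (sym_integrable P ((hmeasG4 _).comp measurable_fst) (fun p => hG4bd _ p.1))) hpt
      _ = (∫ p, G4 σ p.2 ∂P) + ∫ p, G4 (fun i => !σ i) p.1 ∂P :=
          integral_add
            (sym_integrable P ((hmeasG4 σ).comp measurable_snd) (fun p => hG4bd σ p.2))
            (sym_integrable P ((hmeasG4 _).comp measurable_fst) (fun p => hG4bd _ p.1))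
      _ = (∫ S, G4 σ S ∂ν) + ∫ S, G4 (fun i => !σ i) S ∂ν := by rw [hsnd σ, hfst _]
  -- Step E: reindex the sign flip
  have hE : ∑ σ : Fin N → Bool, ∫ S, G4 (fun i => !σ i) S ∂ν
      = ∑ σ : Fin N → Bool, ∫ S, G4 σ S ∂ν :=
    Fintype.sum_bijective (fun σ : Fin N → Bool => fun i => !σ i)
      (Function.Involutive.bijective fun σ => by funext i; simp) _ _ (fun σ => rfl)
  -- RHS computation
  have hRHS : ∫ S, ((2 ^ N : ℝ)⁻¹ * ∑ σ : Fin N → Bool, G4 σ S) ∂ν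
      = (2 ^ N : ℝ)⁻¹ * ∑ σ : Fin N → Bool, ∫ S, G4 σ S ∂ν := by
    rw [integral_const_mul]
    congr 1
    exact integral_finset_sum _ fun σ _ => hintG4 σ
  -- final chain
  show (∫ S, G1 S ∂ν) ≤ 2 * ∫ S, ((2 ^ N : ℝ)⁻¹ * ∑ σ : Fin N → Bool, G4 σ S) ∂ν
  calc (∫ S, G1 S ∂ν) ≤ ∫ p, G2 p ∂P := hA3
    _ = (2 ^ N : ℝ)⁻¹ * ∑ σ : Fin N → Bool, ∫ p, G3 σ p ∂P := hB2
    _ ≤ (2 ^ N : ℝ)⁻¹ * ∑ σ : Fin N → Bool,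
          ((∫ S, G4 σ S ∂ν) + ∫ S, G4 (fun i => !σ i) S ∂ν) :=
        mul_le_mul_of_nonneg_left (Finset.sum_le_sum fun σ _ => hD σ) (by positivity)
    _ = (2 ^ N : ℝ)⁻¹ * ((∑ σ : Fin N → Bool, ∫ S, G4 σ S ∂ν)
          + ∑ σ : Fin N → Bool, ∫ S, G4 (fun i => !σ i) S ∂ν) := by
        rw [Finset.sum_add_distrib]
    _ = 2 * ((2 ^ N : ℝ)⁻¹ * ∑ σ : Fin N → Bool, ∫ S, G4 σ S ∂ν) := by rw [hE]; ring
    _ = 2 * ∫ S, ((2 ^ N : ℝ)⁻¹ * ∑ σ : Fin N → Bool, G4 σ S) ∂ν := by rw [hRHS]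
end

section
/- Chaining bound for Rademacher averages via dyadic covering nets: let N ≥ 1 and m ≥ 1 be integers, C > 0, and let A ⊆ ℝ^N be a nonempty set with |a_i| ≤ C for every a ∈ A and every coordinate i. Suppose that for each j ∈ {0, 1, …, m} there is a finite nonempty set 𝒩_j ⊆ ℝ^N such that |𝒩_0| = 1 and such that for every a ∈ A there exists b ∈ 𝒩_j with max_{1≤i≤N} |a_i − b_i| ≤ 2^{−j} C. Then 2^{−N} Σ_{σ ∈ {−1,1}^N} sup_{a∈A} (1/N) Σ_{i=1}^N σ_i a_i ≤ 2^{−m} C + (3C/√N) Σ_{j=1}^m 2^{−j} √(2 ( log|𝒩_j| + log|𝒩_{j−1}| )). -/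
open Finset

noncomputable def rademEps (b : Bool) : ℝ := if b then 1 else -1

lemma rademEps_abs (b : Bool) : |rademEps b| = 1 := by cases b <;> simp [rademEps]

lemma rademEps_not (b : Bool) : rademEps (!b) = - rademEps b := by cases b <;> simp [rademEps]

lemma sum_rademEps_zero (N : ℕ) (i : Fin N) :
    ∑ σ : Fin N → Bool, rademEps (σ i) = 0 := by
  classical
  have hinv : Function.Involutive (fun σ : Fin N → Bool => Function.update σ i (!σ i)) := by
    intro σ
    simp [Function.update_idem, Function.update_self]
  have h : (∑ σ : Fin N → Bool, rademEps (σ i))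
      = ∑ σ : Fin N → Bool, - rademEps (σ i) := by
    refine Fintype.sum_bijective _ hinv.bijective _ _ ?_
    intro σ
    simp [Function.update_self, rademEps_not]
  rw [Finset.sum_neg_distrib] at h
  linarith

lemma sum_exp_rademEps {N : ℕ} (v : Fin N → ℝ) :
    ∑ σ : Fin N → Bool, Real.exp (∑ i, rademEps (σ i) * v i)
      = ∏ i, (Real.exp (v i) + Real.exp (-v i)) := by
  have h1 : ∀ σ : Fin N → Bool, Real.exp (∑ i, rademEps (σ i) * v i)
      = ∏ i, Real.exp (rademEps (σ i) * v i) := fun σ => Real.exp_sum _ _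
  simp_rw [h1]
  calc ∑ σ : Fin N → Bool, ∏ i, Real.exp (rademEps (σ i) * v i)
      = ∑ σ ∈ Fintype.piFinset (fun _ : Fin N => (Finset.univ : Finset Bool)),
          ∏ i, Real.exp (rademEps (σ i) * v i) := by rw [Fintype.piFinset_univ]
    _ = ∏ i, ∑ b : Bool, Real.exp (rademEps b * v i) :=
        (Finset.prod_univ_sum (fun _ => (Finset.univ : Finset Bool)) (fun i b => Real.exp (rademEps b * v i))).symm
    _ = ∏ i, (Real.exp (v i) + Real.exp (-v i)) := by
        refine Finset.prod_congr rfl fun i _ => ?_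
        simp [rademEps, Fintype.sum_bool, neg_one_mul]
set_option maxHeartbeats 1000000 in
lemma radem_massart {N : ℕ} (hN : 0 < N) {L : ℝ} (hL : 0 ≤ L)
    (B : Finset (Fin N → ℝ)) (hB : B.Nonempty)
    (hbd : ∀ v ∈ B, ∀ i, |v i| ≤ L) :
    (2 ^ N : ℝ)⁻¹ * ∑ σ : Fin N → Bool,
        B.sup' hB (fun v => ∑ i, rademEps (σ i) * v i)
      ≤ L * Real.sqrt N * Real.sqrt (2 * Real.log B.card) := by
  have hswap : ∀ v : Fin N → ℝ,
      ∑ σ : Fin N → Bool, ∑ i, rademEps (σ i) * v i = 0 := by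
    intro v
    rw [Finset.sum_comm]
    refine Finset.sum_eq_zero fun i _ => ?_
    rw [← Finset.sum_mul, sum_rademEps_zero, zero_mul]
  rcases eq_or_lt_of_le (Finset.one_le_card.mpr hB) with hcard1 | hcard2
  · -- B.card = 1
    obtain ⟨v, hv⟩ := Finset.card_eq_one.mp hcard1.symm
    subst hv
    simp only [Finset.sup'_singleton, Finset.card_singleton, Nat.cast_one, Real.log_one,
      mul_zero, Real.sqrt_zero]
    rw [hswap v, mul_zero]
  -- B.card ≥ 2
  have hK1 : (1 : ℝ) < (B.card : ℝ) := by exact_mod_cast hcard2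
  have hlogK : 0 < Real.log (B.card : ℝ) := Real.log_pos hK1
  rcases eq_or_lt_of_le hL with hL0 | hLpos
  · -- L = 0 : all vectors zero
    have hz : ∀ σ : Fin N → Bool,
        B.sup' hB (fun v => ∑ i, rademEps (σ i) * v i) = 0 := by
      intro σ
      have : ∀ v ∈ B, (∑ i, rademEps (σ i) * v i) = (fun _ : Fin N → ℝ => (0:ℝ)) v := by
        intro v hv
        refine Finset.sum_eq_zero fun i _ => ?_
        have : v i = 0 := by
          have := hbd v hv i
          rw [← hL0] at this
          exact abs_eq_zero.mp (le_antisymm this (abs_nonneg _))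
        rw [this, mul_zero]
      rw [Finset.sup'_congr hB rfl this, Finset.sup'_const]
    simp only [hz, Finset.sum_const, smul_zero, mul_zero, ← hL0, zero_mul]
    exact le_rfl
  -- main case
  set K : ℝ := (B.card : ℝ) with hKdef
  have hNpos : (0:ℝ) < N := by exact_mod_cast hN
  set lam : ℝ := Real.sqrt (2 * Real.log K / (N * L ^ 2)) with hlam
  have hargpos : 0 < 2 * Real.log K / (↑N * L ^ 2) := by
    apply div_pos (by linarith) (by positivity)
  have hlampos : 0 < lam := Real.sqrt_pos.mpr hargpos
  set X : (Fin N → Bool) → ℝ := fun σ => B.sup' hB (fun v => ∑ i, rademEps (σ i) * v i) with hX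
  set S : ℝ := (2 ^ N : ℝ)⁻¹ * ∑ σ : Fin N → Bool, X σ with hS
  have hcardfun : (Fintype.card (Fin N → Bool) : ℝ) = 2 ^ N := by
    simp [Fintype.card_fun]
  -- Jensen
  have h1 : Real.exp (lam * S) ≤ (2 ^ N : ℝ)⁻¹ * ∑ σ : Fin N → Bool, Real.exp (lam * X σ) := by
    have hJ := ConvexOn.map_sum_le (t := (Finset.univ : Finset (Fin N → Bool)))
      (w := fun _ => (2 ^ N : ℝ)⁻¹) (p := fun σ => lam * X σ) convexOn_exp
      (fun _ _ => by positivity)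
      (by rw [Finset.sum_const, nsmul_eq_mul, Finset.card_univ]
          rw [show ((Fintype.card (Fin N → Bool) : ℝ)) = 2 ^ N from hcardfun]
          field_simp)
      (fun _ _ => Set.mem_univ _)
    have heq : ∑ σ : Fin N → Bool, (2 ^ N : ℝ)⁻¹ • (lam * X σ) = lam * S := by
      rw [hS]
      simp only [smul_eq_mul]
      rw [← Finset.mul_sum, ← Finset.mul_sum]
      ring
    rw [heq] at hJ
    refine hJ.trans_eq ?_
    simp only [smul_eq_mul]
    rw [Finset.mul_sum]
  -- bound each exp(lam * X σ) by the sum over B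
  have h2 : ∀ σ : Fin N → Bool, Real.exp (lam * X σ)
      ≤ ∑ v ∈ B, Real.exp (∑ i, rademEps (σ i) * (lam * v i)) := by
    intro σ
    obtain ⟨v0, hv0, hXeq⟩ := Finset.exists_mem_eq_sup' hB (fun v => ∑ i, rademEps (σ i) * v i)
    have : lam * X σ = ∑ i, rademEps (σ i) * (lam * v0 i) := by
      rw [hX]; dsimp only; rw [hXeq, Finset.mul_sum]
      exact Finset.sum_congr rfl fun i _ => by ring
    rw [this]
    classical
    rw [← Finset.add_sum_erase B _ hv0]
    exact le_add_of_nonneg_right (Finset.sum_nonneg fun v _ => (Real.exp_pos _).le)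
  -- per-vector mgf bound
  have h3 : ∀ v ∈ B, ∑ σ : Fin N → Bool, Real.exp (∑ i, rademEps (σ i) * (lam * v i))
      ≤ 2 ^ N * Real.exp (N * (lam ^ 2 * L ^ 2 / 2)) := by
    intro v hv
    rw [sum_exp_rademEps (fun i => lam * v i)]
    calc ∏ i, (Real.exp (lam * v i) + Real.exp (-(lam * v i)))
        ≤ ∏ _i : Fin N, (2 * Real.exp (lam ^ 2 * L ^ 2 / 2)) := by
          refine Finset.prod_le_prod (fun i _ => by positivity) (fun i _ => ?_)
          have hcosh : Real.exp (lam * v i) + Real.exp (-(lam * v i))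
              = 2 * Real.cosh (lam * v i) := by
            rw [Real.cosh_eq]; ring
          rw [hcosh]
          have h4 : Real.cosh (lam * v i) ≤ Real.exp ((lam * v i) ^ 2 / 2) :=
            Real.cosh_le_exp_half_sq _
          have h5 : (lam * v i) ^ 2 / 2 ≤ lam ^ 2 * L ^ 2 / 2 := by
            have : (v i) ^ 2 ≤ L ^ 2 := by
              rw [← sq_abs]
              exact pow_le_pow_left₀ (abs_nonneg _) (hbd v hv i) 2
            nlinarith [sq_nonneg lam]
          have := h4.trans (Real.exp_le_exp.mpr h5)
          linarith
      _ = 2 ^ N * Real.exp (N * (lam ^ 2 * L ^ 2 / 2)) := by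
          rw [Finset.prod_const, Finset.card_univ, Fintype.card_fin, mul_pow,
            ← Real.exp_nat_mul]
  -- combine
  have h6 : Real.exp (lam * S) ≤ K * Real.exp (N * (lam ^ 2 * L ^ 2 / 2)) := by
    refine h1.trans ?_
    have : ∑ σ : Fin N → Bool, Real.exp (lam * X σ)
        ≤ ∑ v ∈ B, (2 ^ N * Real.exp (N * (lam ^ 2 * L ^ 2 / 2))) := by
      calc ∑ σ : Fin N → Bool, Real.exp (lam * X σ)
          ≤ ∑ σ : Fin N → Bool, ∑ v ∈ B, Real.exp (∑ i, rademEps (σ i) * (lam * v i)) :=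
            Finset.sum_le_sum fun σ _ => h2 σ
        _ = ∑ v ∈ B, ∑ σ : Fin N → Bool, Real.exp (∑ i, rademEps (σ i) * (lam * v i)) := by
            rw [Finset.sum_comm]
        _ ≤ ∑ v ∈ B, (2 ^ N * Real.exp (N * (lam ^ 2 * L ^ 2 / 2))) :=
            Finset.sum_le_sum h3
      
    rw [Finset.sum_const, nsmul_eq_mul] at this
    calc (2 ^ N : ℝ)⁻¹ * ∑ σ : Fin N → Bool, Real.exp (lam * X σ)
        ≤ (2 ^ N : ℝ)⁻¹ * (B.card * (2 ^ N * Real.exp (N * (lam ^ 2 * L ^ 2 / 2)))) := by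
          refine mul_le_mul_of_nonneg_left this (by positivity)
      _ = K * Real.exp (N * (lam ^ 2 * L ^ 2 / 2)) := by
          rw [hKdef]; field_simp
  have h7 : lam * S ≤ Real.log K + N * (lam ^ 2 * L ^ 2 / 2) := by
    have hKpos : (0:ℝ) < K := by linarith
    have : Real.exp (lam * S) ≤ Real.exp (Real.log K + N * (lam ^ 2 * L ^ 2 / 2)) := by
      rw [Real.exp_add, Real.exp_log hKpos]
      exact h6
    exact Real.exp_le_exp.mp this
  -- solve for S
  have hS_le : S ≤ Real.log K / lam + lam * (↑N * L ^ 2) / 2 := by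
    calc S = lam * S / lam := (mul_div_cancel_left₀ S hlampos.ne').symm
      _ ≤ (Real.log K + ↑N * (lam ^ 2 * L ^ 2 / 2)) / lam := by gcongr
      _ = Real.log K / lam + lam * (↑N * L ^ 2) / 2 := by
          field_simp
  -- compute the optimum value
  set R : ℝ := L * Real.sqrt N with hR
  have hRpos : 0 < R := mul_pos hLpos (Real.sqrt_pos.mpr hNpos)
  have hNL : (N:ℝ) * L ^ 2 = R ^ 2 := by
    rw [hR, mul_pow, Real.sq_sqrt (le_of_lt hNpos)]; ring
  set t : ℝ := Real.sqrt (2 * Real.log K) with ht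
  have htpos : 0 < t := Real.sqrt_pos.mpr (by linarith)
  have ht2 : t ^ 2 = 2 * Real.log K := Real.sq_sqrt (by linarith)
  have hlam_eq : lam = t / R := by
    rw [hlam, ht, hNL, Real.sqrt_div (by linarith : (0:ℝ) ≤ 2 * Real.log K) (R ^ 2),
      Real.sqrt_sq hRpos.le]
  have hopt : Real.log K / lam + lam * (↑N * L ^ 2) / 2 = R * t := by
    rw [hlam_eq, hNL]
    have hlog : Real.log K = t ^ 2 / 2 := by rw [ht2]; ring
    rw [hlog]
    field_simp
    ring
  exact hS_le.trans_eq hopt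

lemma radem_sup'_const_mul {α : Type*} (s : Finset α) (hs : s.Nonempty) (c : ℝ) (hc : 0 ≤ c)
    (f : α → ℝ) :
    s.sup' hs (fun v => c * f v) = c * s.sup' hs f := by
  rw [Finset.comp_sup'_eq_sup'_comp hs (fun x => c * x)
    (fun x y => by simpa using mul_max_of_nonneg x y hc)]
  rfl

set_option maxHeartbeats 1000000 in
/-- Chaining bound for empirical Rademacher averages via dyadic covering nets: if `A ⊆ ℝ^N` has
coordinates bounded by `C` and, for each `j ≤ m`, `𝒩 j` is a finite nonempty `2^{−j}C`-covering
net of `A` in the sup-coordinate metric with `|𝒩 0| = 1`, then the empirical Rademacher average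
of `A` (exact average over all `2^N` sign patterns, `σ i = true` encoding `+1`) is at most
`2^{−m} C + (3C/√N) Σ_{j=1}^m 2^{−j} √(2(log|𝒩 j| + log|𝒩 (j−1)|))`. -/
theorem chaining_rademacher_bound (N m : ℕ) (hN : 0 < N) (hm : 0 < m)
    (C : ℝ) (hC : 0 < C)
    (A : Set (Fin N → ℝ)) (hA : A.Nonempty) (hbd : ∀ a ∈ A, ∀ i, |a i| ≤ C)
    (𝒩 : ℕ → Finset (Fin N → ℝ))
    (hne : ∀ j ≤ m, (𝒩 j).Nonempty)
    (hcard0 : (𝒩 0).card = 1)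
    (hcov : ∀ j ≤ m, ∀ a ∈ A, ∃ b ∈ 𝒩 j, ∀ i, |a i - b i| ≤ ((2 : ℝ) ^ j)⁻¹ * C) :
    (2 ^ N : ℝ)⁻¹ * ∑ σ : Fin N → Bool,
        ⨆ a : A, (1 / N) * ∑ i, (if σ i then (1 : ℝ) else -1) * (a : Fin N → ℝ) i
      ≤ ((2 : ℝ) ^ m)⁻¹ * C + (3 * C / Real.sqrt N) * ∑ j ∈ Finset.Icc 1 m,
          ((2 : ℝ) ^ j)⁻¹
            * Real.sqrt (2 * (Real.log ((𝒩 j).card) + Real.log ((𝒩 (j - 1)).card))) := by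
  classical
  have hA' : Nonempty A := hA.to_subtype
  have hNpos : (0:ℝ) < N := by exact_mod_cast hN
  obtain ⟨b0, hb0⟩ := Finset.card_eq_one.mp hcard0
  simp only [show ∀ b : Bool, (if b then (1:ℝ) else -1) = rademEps b from fun b => rfl]
  -- chain selection
  have hchoice : ∀ a : Fin N → ℝ, a ∈ A → ∃ b : ℕ → (Fin N → ℝ),
      ∀ j, j ≤ m → b j ∈ 𝒩 j ∧ ∀ i, |a i - b j i| ≤ ((2:ℝ)^j)⁻¹ * C := by
    intro a ha
    choose b hb1 hb2 using fun j : {j : ℕ // j ≤ m} => hcov j.1 j.2 a ha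
    refine ⟨fun j => if h : j ≤ m then b ⟨j, h⟩ else 0, fun j hj => ?_⟩
    dsimp only
    rw [dif_pos hj]
    exact ⟨hb1 ⟨j, hj⟩, hb2 ⟨j, hj⟩⟩
  choose! bch hbch using hchoice
  obtain ⟨a0, ha0⟩ := hA
  -- difference nets
  set D : ℕ → Finset (Fin N → ℝ) := fun j =>
    insert (bch a0 j - bch a0 (j - 1))
      (((𝒩 j ×ˢ 𝒩 (j - 1)).filter
        fun p => ∀ i, |p.1 i - p.2 i| ≤ 3 * ((2:ℝ)^j)⁻¹ * C).image fun p => p.1 - p.2)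
    with hDdef
  have hDne : ∀ j, (D j).Nonempty := fun j => Finset.insert_nonempty _ _
  have hchainmem : ∀ j, 1 ≤ j → j ≤ m → ∀ a, a ∈ A →
      (bch a j - bch a (j-1)) ∈
        ((𝒩 j ×ˢ 𝒩 (j - 1)).filter
          fun p => ∀ i, |p.1 i - p.2 i| ≤ 3 * ((2:ℝ)^j)⁻¹ * C).image (fun p => p.1 - p.2) := by
    intro j hj1 hjm a ha
    refine Finset.mem_image.mpr ⟨(bch a j, bch a (j-1)), ?_, rfl⟩
    rw [Finset.mem_filter]
    refine ⟨Finset.mem_product.mpr ⟨(hbch a ha j hjm).1,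
      (hbch a ha (j-1) (le_trans (Nat.sub_le j 1) hjm)).1⟩, ?_⟩
    intro i
    obtain ⟨k, rfl⟩ : ∃ k, j = k + 1 := ⟨j - 1, by omega⟩
    have h1 := (hbch a ha (k+1) hjm).2 i
    have h2 := (hbch a ha k (by omega : k ≤ m)).2 i
    have hk : (k+1) - 1 = k := by omega
    dsimp only
    rw [hk]
    have hpow : ((2:ℝ)^k)⁻¹ = 2 * ((2:ℝ)^(k+1))⁻¹ := by
      rw [pow_succ]
      have : ((2:ℝ)^k) ≠ 0 := by positivity
      field_simp
    rw [hpow] at h2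
    have habs : |bch a (k+1) i - bch a k i|
        ≤ |a i - bch a (k+1) i| + |a i - bch a k i| := by
      calc |bch a (k+1) i - bch a k i|
          = |(a i - bch a k i) + -(a i - bch a (k+1) i)| := by congr 1; ring
        _ ≤ |a i - bch a k i| + |-(a i - bch a (k+1) i)| := abs_add_le _ _
        _ = |a i - bch a (k+1) i| + |a i - bch a k i| := by rw [abs_neg]; ring
    linarith
  have hDbd : ∀ j, 1 ≤ j → j ≤ m → ∀ v ∈ D j, ∀ i, |v i| ≤ 3 * ((2:ℝ)^j)⁻¹ * C := by
    intro j hj1 hjm v hv i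
    have hDeq : D j = ((𝒩 j ×ˢ 𝒩 (j - 1)).filter
        fun p => ∀ i, |p.1 i - p.2 i| ≤ 3 * ((2:ℝ)^j)⁻¹ * C).image (fun p => p.1 - p.2) := by
      rw [hDdef]
      exact Finset.insert_eq_self.mpr (hchainmem j hj1 hjm a0 ha0)
    rw [hDeq] at hv
    obtain ⟨p, hp, rfl⟩ := Finset.mem_image.mp hv
    have := (Finset.mem_filter.mp hp).2 i
    simpa using this
  have hDcard : ∀ j, 1 ≤ j → j ≤ m →
      ((D j).card : ℝ) ≤ ((𝒩 j).card : ℝ) * ((𝒩 (j-1)).card : ℝ) := by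
    intro j hj1 hjm
    have hDeq : D j = ((𝒩 j ×ˢ 𝒩 (j - 1)).filter
        fun p => ∀ i, |p.1 i - p.2 i| ≤ 3 * ((2:ℝ)^j)⁻¹ * C).image (fun p => p.1 - p.2) := by
      rw [hDdef]
      exact Finset.insert_eq_self.mpr (hchainmem j hj1 hjm a0 ha0)
    rw [hDeq]
    have h1 : (((𝒩 j ×ˢ 𝒩 (j - 1)).filter
        fun p => ∀ i, |p.1 i - p.2 i| ≤ 3 * ((2:ℝ)^j)⁻¹ * C).image (fun p => p.1 - p.2)).card
        ≤ (𝒩 j).card * (𝒩 (j-1)).card := by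
      calc _ ≤ ((𝒩 j ×ˢ 𝒩 (j - 1)).filter
            fun p => ∀ i, |p.1 i - p.2 i| ≤ 3 * ((2:ℝ)^j)⁻¹ * C).card :=
            Finset.card_image_le
        _ ≤ (𝒩 j ×ˢ 𝒩 (j - 1)).card := Finset.card_le_card (Finset.filter_subset _ _)
        _ = (𝒩 j).card * (𝒩 (j-1)).card := Finset.card_product _ _
    exact_mod_cast h1
  -- log bound
  have hlog : ∀ j, 1 ≤ j → j ≤ m →
      Real.log ((D j).card) ≤ Real.log ((𝒩 j).card) + Real.log ((𝒩 (j-1)).card) := by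
    intro j hj1 hjm
    have hpos : (0:ℝ) < ((D j).card : ℝ) := by
      exact_mod_cast Finset.card_pos.mpr (hDne j)
    have hp1 : (0:ℝ) < ((𝒩 j).card : ℝ) := by
      exact_mod_cast Finset.card_pos.mpr (hne j hjm)
    have hp2 : (0:ℝ) < ((𝒩 (j-1)).card : ℝ) := by
      exact_mod_cast Finset.card_pos.mpr (hne (j-1) (le_trans (Nat.sub_le j 1) hjm))
    calc Real.log ((D j).card)
        ≤ Real.log (((𝒩 j).card : ℝ) * ((𝒩 (j-1)).card : ℝ)) :=
          Real.log_le_log hpos (hDcard j hj1 hjm)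
      _ = Real.log ((𝒩 j).card) + Real.log ((𝒩 (j-1)).card) :=
          Real.log_mul (ne_of_gt hp1) (ne_of_gt hp2)
  -- pointwise chaining bound
  set F : ℕ → (Fin N → Bool) → ℝ := fun j σ =>
    (D j).sup' (hDne j) (fun v => (1/(N:ℝ)) * ∑ i, rademEps (σ i) * v i) with hFdef
  have hpoint : ∀ σ : Fin N → Bool,
      (⨆ a : A, (1/(N:ℝ)) * ∑ i, rademEps (σ i) * (a : Fin N → ℝ) i)
        ≤ ((2:ℝ)^m)⁻¹ * C + (∑ j ∈ Finset.Icc 1 m, F j σ)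
          + (1/(N:ℝ)) * ∑ i, rademEps (σ i) * b0 i := by
    intro σ
    refine ciSup_le fun a => ?_
    obtain ⟨a, ha⟩ := a
    dsimp only
    set s : ℕ → ℝ := fun j => (1/(N:ℝ)) * ∑ i, rademEps (σ i) * bch a j i with hs
    have tele : ∑ j ∈ Finset.Icc 1 m, (s j - s (j-1)) = s m - s 0 := by
      rw [← Finset.Ico_add_one_right_eq_Icc, Finset.sum_Ico_eq_sum_range]
      have hcongr : ∀ i ∈ Finset.range (m + 1 - 1), s (1 + i) - s (1 + i - 1)
          = s (i + 1) - s i := by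
        intro i _
        have e1 : 1 + i = i + 1 := Nat.add_comm 1 i
        have e2 : 1 + i - 1 = i := by omega
        rw [e2, e1]
      rw [Finset.sum_congr rfl hcongr]
      rw [show m + 1 - 1 = m from rfl]
      exact Finset.sum_range_sub s m
    have hdecomp : (1/(N:ℝ)) * ∑ i, rademEps (σ i) * a i
        = ((1/(N:ℝ)) * ∑ i, rademEps (σ i) * (a i - bch a m i))
          + (∑ j ∈ Finset.Icc 1 m, (s j - s (j-1))) + s 0 := by
      rw [tele]
      have h1 : (1/(N:ℝ)) * ∑ i, rademEps (σ i) * (a i - bch a m i)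
          = (1/(N:ℝ)) * ∑ i, rademEps (σ i) * a i - s m := by
        rw [hs]
        dsimp only
        rw [← mul_sub, ← Finset.sum_sub_distrib]
        congr 1
        refine Finset.sum_congr rfl fun i _ => by ring
      rw [h1]; ring
    rw [hdecomp]
    have hb1 : (1/(N:ℝ)) * ∑ i, rademEps (σ i) * (a i - bch a m i) ≤ ((2:ℝ)^m)⁻¹ * C := by
      have hsum : ∑ i, rademEps (σ i) * (a i - bch a m i) ≤ (N:ℝ) * (((2:ℝ)^m)⁻¹ * C) := by
        calc ∑ i, rademEps (σ i) * (a i - bch a m i)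
            ≤ ∑ _i : Fin N, ((2:ℝ)^m)⁻¹ * C := by
              refine Finset.sum_le_sum fun i _ => ?_
              have h := (hbch a ha m le_rfl).2 i
              calc rademEps (σ i) * (a i - bch a m i)
                  ≤ |rademEps (σ i) * (a i - bch a m i)| := le_abs_self _
                _ = |a i - bch a m i| := by rw [abs_mul, rademEps_abs, one_mul]
                _ ≤ ((2:ℝ)^m)⁻¹ * C := h
          _ = (N:ℝ) * (((2:ℝ)^m)⁻¹ * C) := by
              rw [Finset.sum_const, Finset.card_univ, Fintype.card_fin, nsmul_eq_mul]
      calc (1/(N:ℝ)) * ∑ i, rademEps (σ i) * (a i - bch a m i)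
          ≤ (1/(N:ℝ)) * ((N:ℝ) * (((2:ℝ)^m)⁻¹ * C)) :=
            mul_le_mul_of_nonneg_left hsum (by positivity)
        _ = ((2:ℝ)^m)⁻¹ * C := by field_simp
    have hb2 : ∀ j ∈ Finset.Icc 1 m, s j - s (j-1) ≤ F j σ := by
      intro j hj
      rw [Finset.mem_Icc] at hj
      have hmem : bch a j - bch a (j-1) ∈ D j := by
        rw [hDdef]
        exact Finset.mem_insert_of_mem (hchainmem j hj.1 hj.2 a ha)
      have heq : s j - s (j-1)
          = (1/(N:ℝ)) * ∑ i, rademEps (σ i) * (bch a j - bch a (j-1)) i := by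
        rw [hs]
        dsimp only
        rw [← mul_sub, ← Finset.sum_sub_distrib]
        congr 1
        refine Finset.sum_congr rfl fun i _ => ?_
        simp only [Pi.sub_apply]
        ring
      rw [heq, hFdef]
      exact Finset.le_sup' (fun v => (1/(N:ℝ)) * ∑ i, rademEps (σ i) * v i) hmem
    have hb3 : s 0 = (1/(N:ℝ)) * ∑ i, rademEps (σ i) * b0 i := by
      have hmem0 : bch a 0 ∈ 𝒩 0 := (hbch a ha 0 (Nat.zero_le m)).1
      rw [hb0, Finset.mem_singleton] at hmem0
      rw [hs]
      dsimp only
      rw [hmem0]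
    exact add_le_add (add_le_add hb1 (Finset.sum_le_sum hb2)) (le_of_eq hb3)
  -- zero mean of the root term
  have hzero : ∑ σ : Fin N → Bool, (1/(N:ℝ)) * ∑ i, rademEps (σ i) * b0 i = 0 := by
    rw [← Finset.mul_sum, Finset.sum_comm]
    have h : ∀ i : Fin N, (∑ σ : Fin N → Bool, rademEps (σ i) * b0 i) = 0 := by
      intro i
      rw [← Finset.sum_mul, sum_rademEps_zero, zero_mul]
    rw [Finset.sum_congr rfl fun i _ => h i, Finset.sum_const_zero, mul_zero]
  have hcard2N : ((Fintype.card (Fin N → Bool)) : ℝ) = 2 ^ N := by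
    simp [Fintype.card_fun]
  -- per scale Massart bound
  have hperj : ∀ j ∈ Finset.Icc 1 m,
      (2 ^ N : ℝ)⁻¹ * ∑ σ : Fin N → Bool, F j σ
        ≤ (3 * C / Real.sqrt N) * (((2:ℝ)^j)⁻¹
            * Real.sqrt (2 * (Real.log ((𝒩 j).card) + Real.log ((𝒩 (j - 1)).card)))) := by
    intro j hj
    rw [Finset.mem_Icc] at hj
    have hL : (0:ℝ) ≤ 3 * ((2:ℝ)^j)⁻¹ * C := by positivity
    have hmassart := radem_massart hN hL (D j) (hDne j) (hDbd j hj.1 hj.2)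
    have hpull : ∀ σ : Fin N → Bool, F j σ
        = (1/(N:ℝ)) * (D j).sup' (hDne j) (fun v => ∑ i, rademEps (σ i) * v i) := by
      intro σ
      rw [hFdef]
      exact radem_sup'_const_mul _ _ _ (by positivity) _
    have hT : Real.sqrt (2 * Real.log ((D j).card))
        ≤ Real.sqrt (2 * (Real.log ((𝒩 j).card) + Real.log ((𝒩 (j - 1)).card))) := by
      apply Real.sqrt_le_sqrt
      have := hlog j hj.1 hj.2
      linarith
    have hsq : Real.sqrt N * Real.sqrt N = (N:ℝ) := Real.mul_self_sqrt hNpos.le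
    have hsqrtpos : (0:ℝ) < Real.sqrt N := Real.sqrt_pos.mpr hNpos
    have hdivN : Real.sqrt N / (N:ℝ) = 1 / Real.sqrt N := by
      rw [div_eq_div_iff hNpos.ne' hsqrtpos.ne', one_mul, mul_comm]
      exact hsq
    calc (2 ^ N : ℝ)⁻¹ * ∑ σ : Fin N → Bool, F j σ
        = (1/(N:ℝ)) * ((2 ^ N : ℝ)⁻¹ * ∑ σ : Fin N → Bool,
            (D j).sup' (hDne j) (fun v => ∑ i, rademEps (σ i) * v i)) := by
          rw [Finset.sum_congr rfl fun σ _ => hpull σ, ← Finset.mul_sum]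
          ring
      _ ≤ (1/(N:ℝ)) * (3 * ((2:ℝ)^j)⁻¹ * C * Real.sqrt N
            * Real.sqrt (2 * Real.log ((D j).card))) :=
          mul_le_mul_of_nonneg_left hmassart (by positivity)
      _ ≤ (1/(N:ℝ)) * (3 * ((2:ℝ)^j)⁻¹ * C * Real.sqrt N
            * Real.sqrt (2 * (Real.log ((𝒩 j).card) + Real.log ((𝒩 (j - 1)).card)))) := by
          apply mul_le_mul_of_nonneg_left _ (by positivity)
          apply mul_le_mul_of_nonneg_left hT (by positivity)
      _ = 3 * C * (((2:ℝ)^j)⁻¹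
            * Real.sqrt (2 * (Real.log ((𝒩 j).card) + Real.log ((𝒩 (j - 1)).card))))
            * (Real.sqrt N / (N:ℝ)) := by ring
      _ = (3 * C / Real.sqrt N) * (((2:ℝ)^j)⁻¹
            * Real.sqrt (2 * (Real.log ((𝒩 j).card) + Real.log ((𝒩 (j - 1)).card)))) := by
          rw [hdivN]; ring
  -- assemble
  calc (2 ^ N : ℝ)⁻¹ * ∑ σ : Fin N → Bool,
        ⨆ a : A, (1/(N:ℝ)) * ∑ i, rademEps (σ i) * (a : Fin N → ℝ) i
      ≤ (2 ^ N : ℝ)⁻¹ * ∑ σ : Fin N → Bool,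
          (((2:ℝ)^m)⁻¹ * C + (∑ j ∈ Finset.Icc 1 m, F j σ)
            + (1/(N:ℝ)) * ∑ i, rademEps (σ i) * b0 i) :=
        mul_le_mul_of_nonneg_left (Finset.sum_le_sum fun σ _ => hpoint σ) (by positivity)
    _ = ((2:ℝ)^m)⁻¹ * C + ∑ j ∈ Finset.Icc 1 m,
          ((2 ^ N : ℝ)⁻¹ * ∑ σ : Fin N → Bool, F j σ) := by
        rw [Finset.sum_add_distrib, Finset.sum_add_distrib, hzero, add_zero,
          Finset.sum_const, Finset.card_univ, nsmul_eq_mul, hcard2N, Finset.sum_comm]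
        rw [mul_add, ← mul_assoc, inv_mul_cancel₀ (by positivity : ((2:ℝ)^N) ≠ 0), one_mul,
          Finset.mul_sum]
    _ ≤ ((2:ℝ)^m)⁻¹ * C + ∑ j ∈ Finset.Icc 1 m,
          (3 * C / Real.sqrt N) * (((2:ℝ)^j)⁻¹
            * Real.sqrt (2 * (Real.log ((𝒩 j).card) + Real.log ((𝒩 (j - 1)).card)))) :=
        add_le_add (le_refl _) (Finset.sum_le_sum hperj)
    _ = ((2:ℝ)^m)⁻¹ * C + (3 * C / Real.sqrt N) * ∑ j ∈ Finset.Icc 1 m,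
          ((2:ℝ)^j)⁻¹
            * Real.sqrt (2 * (Real.log ((𝒩 j).card) + Real.log ((𝒩 (j - 1)).card))) := by
        rw [Finset.mul_sum]
end
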